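/- arXiv:0811.3676 — 14 statements merged into one kernel-verified Lean document; each statement's English description precedes it below -/
import Mathlib

section
/- Let m, n ∈ ℕ with m ≥ n. Then a_m · a_n = Σ_{i=0}^{n} a_{m+n-2i}; that is, X_{M[m]}·X_{M[n]} = X_{M[m+n]} + X_{M[m+n-2]} + ⋯ + X_{M[m-n+2]} + X_{M[m-n]}. -/
/-- In a homogeneous tube, with `a n` modeling `X_{M[n]}` (and `a 0 = 1`),
the relation `a m * a 1 = a (m+1) + a (m-1)` for `m ≥ 1` implies the multiplication
formula `a m * a n = ∑_{i=0}^{n} a (m+n-2i)` for `m ≥ n`. -/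
theorem homogeneous_tube_multiplication {R : Type*} [CommRing R]
    (a : ℕ → R) (h0 : a 0 = 1)
    (hrec : ∀ m : ℕ, 1 ≤ m → a m * a 1 = a (m + 1) + a (m - 1)) :
    ∀ m n : ℕ, n ≤ m →
      a m * a n = ∑ i ∈ Finset.range (n + 1), a (m + n - 2 * i) := by
  intro m n
  induction n using Nat.twoStepInduction generalizing m with
  | zero =>
    intro _
    simp [h0]
  | one =>
    intro hm
    rw [Finset.sum_range_succ, Finset.sum_range_one]
    have h1 : m + 1 - 2 * 1 = m - 1 := by omega
    have h2 : m + 1 - 2 * 0 = m + 1 := by omega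
    rw [h1, h2, hrec m hm]
  | more n ih1 ih2 =>
    intro hm
    have h1 : a m * a (n + 1) = ∑ i ∈ Finset.range (n + 2), a (m + (n + 1) - 2 * i) :=
      ih2 m (by omega)
    have h2 : a m * a n = ∑ i ∈ Finset.range (n + 1), a (m + n - 2 * i) :=
      ih1 m (by omega)
    have hr : a (n + 1) * a 1 = a (n + 2) + a n := by
      have := hrec (n + 1) (by omega)
      simpa using this
    have step : (∑ i ∈ Finset.range (n + 2), a (m + (n + 1) - 2 * i)) * a 1
        = ∑ i ∈ Finset.range (n + 2), (a (m + (n + 2) - 2 * i) + a (m + n - 2 * i)) := by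
      rw [Finset.sum_mul]
      apply Finset.sum_congr rfl
      intro i hi
      rw [Finset.mem_range] at hi
      have hge : 1 ≤ m + (n + 1) - 2 * i := by omega
      rw [hrec _ hge]
      congr 2 <;> omega
    rw [Finset.sum_add_distrib] at step
    have split1 : ∑ i ∈ Finset.range (n + 2), a (m + n - 2 * i)
        = (∑ i ∈ Finset.range (n + 1), a (m + n - 2 * i)) + a (m + n - 2 * (n + 1)) :=
      Finset.sum_range_succ _ _
    have split2 : ∑ i ∈ Finset.range (n + 2 + 1), a (m + (n + 2) - 2 * i)
        = (∑ i ∈ Finset.range (n + 2), a (m + (n + 2) - 2 * i)) + a (m + n - 2 * (n + 1)) := by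
      rw [Finset.sum_range_succ]
      congr 1
      congr 1
      omega
    have key : a m * a (n + 2) = a m * (a (n + 1) * a 1) - a m * a n := by
      rw [hr]; ring
    rw [key, ← mul_assoc, h1, step, h2, split2, split1]
    ring
end

section
/- For every i ∈ ℤ and every m ≥ 1 with m·r ≥ 2, one has x_{i,mr} = x_{i+1,mr} + x_{i+1,mr-2} − x_{i+2,mr-2}. -/
/-- In a tube of rank `r`, with `x i n` modeling `X_{E_i[n]}`
(indices `i` periodic mod `r`, `x i 0 = 1`), the cluster multiplication relations
imply `x i (m*r) = x (i+1) (m*r) + x (i+1) (m*r-2) - x (i+2) (m*r-2)` for `m*r ≥ 2`. -/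
theorem tube_shift_formula {R : Type*} [CommRing R] (r : ℕ) (hr : 1 ≤ r)
    (x : ℤ → ℕ → R)
    (hper : ∀ (i : ℤ) (n : ℕ), x (i + (r : ℤ)) n = x i n)
    (hzero : ∀ i : ℤ, x i 0 = 1)
    (hrel1 : ∀ (i : ℤ) (k : ℕ), x i (k + 1) * x (i + (k + 1 : ℕ)) 1 = x i (k + 2) + x i k)
    (hrel2 : ∀ (i : ℤ) (k : ℕ), x i 1 * x (i + 1) (k + 1) = x i (k + 2) + x (i + 2) k)
    (i : ℤ) (m : ℕ) (hm : 1 ≤ m) (hmr : 2 ≤ m * r) :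
    x i (m * r) = x (i + 1) (m * r) + x (i + 1) (m * r - 2) - x (i + 2) (m * r - 2) := by
  have hper' : ∀ (s : ℕ) (j : ℤ) (n : ℕ), x (j + ((s * r : ℕ) : ℤ)) n = x j n := by
    intro s
    induction s with
    | zero => intro j n; simp
    | succ s ih =>
      intro j n
      have h : (((s + 1) * r : ℕ) : ℤ) = ((s * r : ℕ) : ℤ) + (r : ℤ) := by push_cast; ring
      rw [h, ← add_assoc, hper, ih]
  obtain ⟨k, hk⟩ : ∃ k, m * r = k + 2 := ⟨m * r - 2, by omega⟩
  have h1 := hrel2 i k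
  have h2 := hrel1 (i + 1) k
  have hp : x (i + 1 + ((k + 1 : ℕ) : ℤ)) 1 = x i 1 := by
    have he : i + 1 + ((k + 1 : ℕ) : ℤ) = i + ((m * r : ℕ) : ℤ) := by
      rw [hk]; push_cast; ring
    rw [he, hper' m]
  rw [hp] at h2
  rw [hk]
  have hks : k + 2 - 2 = k := by omega
  rw [hks]
  linear_combination h2 - h1
end

section
/- Let 1 ≤ i < j ≤ r be integers (so in particular r ≥ 2) and let m ≥ 1. Then x_{i,mr} = x_{j,mr} + x_{i+1,mr-2} − x_{j+1,mr-2}; that is, X_{E_i[mr]} = X_{E_j[mr]} + X_{E_{i+1}[mr-2]} − X_{E_{j+1}[mr-2]}. -/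
/-- In a tube of rank `r`, for regular simples `E_i`, `E_j` with
`1 ≤ i < j ≤ r` and `m ≥ 1`:
`X_{E_i[mr]} = X_{E_j[mr]} + X_{E_{i+1}[mr-2]} - X_{E_{j+1}[mr-2]}`. -/
theorem tube_difference_formula {R : Type*} [CommRing R] (r : ℕ) (hr : 1 ≤ r)
    (x : ℤ → ℕ → R)
    (hper : ∀ (i : ℤ) (n : ℕ), x (i + (r : ℤ)) n = x i n)
    (hzero : ∀ i : ℤ, x i 0 = 1)
    (hrel1 : ∀ (i : ℤ) (k : ℕ), x i (k + 1) * x (i + (k + 1 : ℕ)) 1 = x i (k + 2) + x i k)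
    (hrel2 : ∀ (i : ℤ) (k : ℕ), x i 1 * x (i + 1) (k + 1) = x i (k + 2) + x (i + 2) k)
    (i j m : ℕ) (hi : 1 ≤ i) (hij : i < j) (hjr : j ≤ r) (hm : 1 ≤ m) :
    x i (m * r) = x j (m * r) + x (i + 1) (m * r - 2) - x (j + 1) (m * r - 2) := by
  -- multi-step periodicity
  have hperm : ∀ (q : ℕ) (a : ℤ) (n : ℕ), x (a + (q : ℤ) * (r : ℤ)) n = x a n := by
    intro q
    induction q with
    | zero => intro a n; simp
    | succ q ih =>
        intro a n
        have : a + ((q : ℤ) + 1) * (r : ℤ) = (a + (r : ℤ)) + (q : ℤ) * (r : ℤ) := by ring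
        push_cast
        rw [this, ih, hper]
  -- r ≥ 2 since 2 ≤ j ≤ r
  have hr2 : 2 ≤ r := le_trans (by omega) hjr
  have hmr2 : 2 ≤ m * r := le_trans hr2 (Nat.le_mul_of_pos_left r hm)
  obtain ⟨k, hk⟩ : ∃ k, m * r = k + 2 := ⟨m * r - 2, by omega⟩
  have hsub : m * r - 2 = k := by omega
  -- key one-step identity
  have key : ∀ a : ℤ, x a (k + 2) - x (a + 1) k = x (a + 1) (k + 2) - x (a + 2) k := by
    intro a
    have hA := hrel1 (a + 1) k
    have hB := hrel2 a k
    -- x (a + 1 + (k+1)) 1 = x a 1   since a + 1 + (k+1) = a + m*r = a + m * r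
    have hco : ((a + 1) + ((k + 1 : ℕ) : ℤ)) = a + (m : ℤ) * (r : ℤ) := by
      push_cast
      have : (m : ℤ) * (r : ℤ) = ((m * r : ℕ) : ℤ) := by push_cast; ring
      rw [this, hk]; push_cast; ring
    rw [hco, hperm m a 1] at hA
    linear_combination hA - hB
  -- iterate
  have iter : ∀ d : ℕ, ∀ a : ℤ,
      x a (k + 2) - x (a + 1) k = x (a + d) (k + 2) - x (a + d + 1) k := by
    intro d
    induction d with
    | zero => intro a; simp
    | succ d ih =>
        intro a
        have h1 := ih (a + 1)
        have h2 := key a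
        push_cast
        push_cast at h1
        rw [show a + 1 + (d : ℤ) = a + ((d : ℤ) + 1) from by ring,
          show a + 1 + 1 = a + 2 from by ring] at h1
        linear_combination h2 + h1
  have hd := iter (j - i) (i : ℤ)
  have e1 : (i : ℤ) + ((j - i : ℕ) : ℤ) = (j : ℤ) := by
    have : ((j - i : ℕ) : ℤ) = (j : ℤ) - (i : ℤ) := by
      push_cast [Nat.cast_sub (le_of_lt hij)]; ring
    rw [this]; ring
  rw [e1] at hd
  rw [hk]
  simp only [Nat.add_sub_cancel]
  push_cast
  push_cast at hd
  linear_combination hd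
end

section
/- Let i, j, k, l, m be integers with 1 ≤ j ≤ i ≤ r, m ≥ 0, 0 ≤ l ≤ r−1, 1 ≤ k ≤ mr+l, and k+i ≥ r+j. Then x_{i,k}·x_{j,mr+l} = x_{i,(m+1)r+l+j−i}·x_{j,k+i−r−j} + x_{i,r+j−i−1}·x_{k+i+1,(m+1)r+l+j−k−i−1}. (Under these hypotheses all quasi-length subscripts appearing are nonnegative.) -/
/-- Theorem 7.1(1)1) of the paper. In a tube of rank `r`, for integers
`1 ≤ j ≤ i ≤ r`, `m ≥ 0`, `0 ≤ l ≤ r-1`, `1 ≤ k ≤ mr+l` and `k+i ≥ r+j`: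
`X_{E_i[k]}·X_{E_j[mr+l]} = X_{E_i[(m+1)r+l+j-i]}·X_{E_j[k+i-r-j]}
  + X_{E_i[r+j-i-1]}·X_{E_{k+i+1}[(m+1)r+l+j-k-i-1]}`. -/
theorem tube_inductive_formula_case1a {R : Type*} [CommRing R] (r : ℤ) (hr : 1 ≤ r)
    (x : ℤ → ℕ → R)
    (hper : ∀ (i : ℤ) (n : ℕ), x (i + r) n = x i n)
    (hzero : ∀ i : ℤ, x i 0 = 1)
    (hrel1 : ∀ (i : ℤ) (k : ℕ), x i (k + 1) * x (i + (k + 1 : ℕ)) 1 = x i (k + 2) + x i k)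
    (hrel2 : ∀ (i : ℤ) (k : ℕ), x i 1 * x (i + 1) (k + 1) = x i (k + 2) + x (i + 2) k)
    (i j k l m : ℤ) (hj : 1 ≤ j) (hji : j ≤ i) (hir : i ≤ r) (hm : 0 ≤ m)
    (hl0 : 0 ≤ l) (hlr : l ≤ r - 1) (hk1 : 1 ≤ k) (hk2 : k ≤ m * r + l)
    (hcase : r + j ≤ k + i) :
    x i k.toNat * x j (m * r + l).toNat =
      x i ((m + 1) * r + l + j - i).toNat * x j (k + i - r - j).toNat +
      x i (r + j - i - 1).toNat * x (k + i + 1) ((m + 1) * r + l + j - k - i - 1).toNat := by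
  -- A flexible form of the first relation.
  have H : ∀ (a b : ℤ) (n n1 n2 : ℕ), b = a + n + 1 → n1 = n + 1 → n2 = n + 2 →
      x a n1 * x b 1 = x a n2 + x a n := by
    rintro a b n n1 n2 rfl rfl rfl
    have h := hrel1 a n
    push_cast at h
    rw [← add_assoc] at h
    exact h
  -- Frieze-type lemma: x_{i,e+s+1} x_{i+e+1,s+1} = x_{i,e+s+2} x_{i+e+1,s} + x_{i,e}
  have C : ∀ (s e : ℕ) (i : ℤ),
      x i (e + s + 1) * x (i + (e : ℤ) + 1) (s + 1)
        = x i (e + s + 2) * x (i + (e : ℤ) + 1) s + x i e := by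
    intro s
    induction s with
    | zero =>
        intro e i
        simp only [Nat.add_zero, Nat.zero_add, hzero, mul_one]
        exact H i (i + (e : ℤ) + 1) e (e + 1) (e + 2) rfl rfl rfl
    | succ s ih =>
        intro e i
        rw [show e + (s + 1) + 1 = e + s + 2 from by omega,
            show s + 1 + 1 = s + 2 from by omega,
            show e + (s + 1) + 2 = e + s + 3 from by omega]
        have h1 := H i (i + (e : ℤ) + (s : ℤ) + 2) (e + s + 1) (e + s + 2) (e + s + 3)
          (by push_cast; ring) (by omega) (by omega)
        have h2 := H (i + (e : ℤ) + 1) (i + (e : ℤ) + (s : ℤ) + 2) s (s + 1) (s + 2)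
          (by push_cast; ring) (by omega) (by omega)
        have h3 := ih e i
        linear_combination x (i + (e : ℤ) + 1) (s + 1) * h1 - x i (e + s + 2) * h2 + h3
  -- Second frieze-type lemma, one step further.
  have C2 : ∀ (s e : ℕ) (i : ℤ),
      x i (e + s + 1) * x (i + (e : ℤ) + 1) (s + 2)
        = x i (e + s + 3) * x (i + (e : ℤ) + 1) s
          + x i e * x (i + (e : ℤ) + (s : ℤ) + 2) 1 := by
    intro s e i
    have h1 := H (i + (e : ℤ) + 1) (i + (e : ℤ) + (s : ℤ) + 2) s (s + 1) (s + 2)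
      (by push_cast; ring) (by omega) (by omega)
    have h2 := H i (i + (e : ℤ) + (s : ℤ) + 2) (e + s + 1) (e + s + 2) (e + s + 3)
      (by push_cast; ring) (by omega) (by omega)
    have h3 := C s e i
    linear_combination (-(x i (e + s + 1))) * h1 + x (i + (e : ℤ) + (s : ℤ) + 2) 1 * h3
      + x (i + (e : ℤ) + 1) s * h2
  -- The main multiplication formula.
  have MAIN : ∀ (t e s : ℕ) (i : ℤ),
      x i (e + s + 1) * x (i + (e : ℤ) + 1) (s + 1 + t)
        = x i (e + s + t + 2) * x (i + (e : ℤ) + 1) s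
          + x i e * x (i + (e : ℤ) + (s : ℤ) + 2) t := by
    intro t
    induction t using Nat.twoStepInduction with
    | zero =>
        intro e s i
        simp only [Nat.add_zero, hzero, mul_one]
        exact C s e i
    | one =>
        intro e s i
        rw [show s + 1 + 1 = s + 2 from by omega, show e + s + 1 + 2 = e + s + 3 from by omega]
        exact C2 s e i
    | more t ih1 ih2 =>
        intro e s i
        rw [show s + 1 + (t + 2) = s + t + 3 from by omega,
            show e + s + (t + 2) + 2 = e + s + t + 4 from by omega]
        have ih1' := ih1 e s i
        rw [show s + 1 + t = s + t + 1 from by omega] at ih1'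
        have ih2' := ih2 e s i
        rw [show s + 1 + (t + 1) = s + t + 2 from by omega,
            show e + s + (t + 1) + 2 = e + s + t + 3 from by omega] at ih2'
        have h1 := H (i + (e : ℤ) + 1) (i + (e : ℤ) + (s : ℤ) + (t : ℤ) + 3)
          (s + t + 1) (s + t + 2) (s + t + 3) (by push_cast; ring) (by omega) (by omega)
        have h2 := H i (i + (e : ℤ) + (s : ℤ) + (t : ℤ) + 3)
          (e + s + t + 2) (e + s + t + 3) (e + s + t + 4) (by push_cast; ring) (by omega) (by omega)
        have h3 := H (i + (e : ℤ) + (s : ℤ) + 2) (i + (e : ℤ) + (s : ℤ) + (t : ℤ) + 3)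
          t (t + 1) (t + 2) (by push_cast; ring) (by omega) (by omega)
        linear_combination (-(x i (e + s + 1))) * h1
          + x (i + (e : ℤ) + (s : ℤ) + (t : ℤ) + 3) 1 * ih2' - ih1'
          + x (i + (e : ℤ) + 1) s * h2 + x i e * h3
  -- Now instantiate.  Abbreviate `m * r` to make everything linear for `omega`.
  obtain ⟨P, hP⟩ : ∃ P : ℤ, P = m * r := ⟨_, rfl⟩
  have hk2' : k ≤ P + l := by rw [hP]; exact hk2
  have hd : 1 ≤ r + j - i := by omega
  rw [show (m * r + l : ℤ) = P + l from by rw [hP],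
      show ((m + 1) * r + l + j - i : ℤ) = P + l + (r + j - i) from by rw [hP]; ring,
      show ((m + 1) * r + l + j - k - i - 1 : ℤ) = P + l + (r + j - i) - k - 1 from by
        rw [hP]; ring]
  have key := MAIN ((P + l + (r + j - i) - k - 1).toNat) ((r + j - i - 1).toNat)
    ((k + i - r - j).toNat) i
  have hj' : ∀ n, x (i + (((r + j - i - 1).toNat : ℤ)) + 1) n = x j n := by
    intro n
    rw [show i + (((r + j - i - 1).toNat : ℤ)) + 1 = j + r from by omega]
    exact hper j n
  have hk' : ∀ n, x (i + (((r + j - i - 1).toNat : ℤ)) + (((k + i - r - j).toNat : ℤ)) + 2) n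
      = x (k + i + 1) n := by
    intro n
    rw [show i + (((r + j - i - 1).toNat : ℤ)) + (((k + i - r - j).toNat : ℤ)) + 2 = k + i + 1
      from by omega]
  simp only [hj', hk'] at key
  rw [show k.toNat = (r + j - i - 1).toNat + (k + i - r - j).toNat + 1 from by omega,
      show (P + l).toNat
          = (k + i - r - j).toNat + 1 + (P + l + (r + j - i) - k - 1).toNat from by omega,
      show (P + l + (r + j - i)).toNat
          = (r + j - i - 1).toNat + (k + i - r - j).toNat
            + (P + l + (r + j - i) - k - 1).toNat + 2 from by omega]
  exact key
end

section
/- Let i, j, k, l, m be integers with 1 ≤ j ≤ i ≤ r, m ≥ 0, 0 ≤ l ≤ r−1, 1 ≤ k ≤ mr+l, k+i < r+j, and i ≤ l+j ≤ k+i−1. Then x_{i,k}·x_{j,mr+l} = x_{j,mr+k+i−j}·x_{i,l+j−i} + x_{j,mr+i−j−1}·x_{l+j+1,k+i−l−j−1}. (Under these hypotheses all quasi-length subscripts appearing are nonnegative.) -/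
/-- Theorem 7.1(1)2) of the paper. In a tube of rank `r`, for integers
`1 ≤ j ≤ i ≤ r`, `m ≥ 0`, `0 ≤ l ≤ r-1`, `1 ≤ k ≤ mr+l`, `k+i < r+j` and
`i ≤ l+j ≤ k+i-1`:
`X_{E_i[k]}·X_{E_j[mr+l]} = X_{E_j[mr+k+i-j]}·X_{E_i[l+j-i]}
  + X_{E_j[mr+i-j-1]}·X_{E_{l+j+1}[k+i-l-j-1]}`. -/
theorem tube_inductive_formula_case1b {R : Type*} [CommRing R] (r : ℤ) (hr : 1 ≤ r)
    (x : ℤ → ℕ → R)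
    (hper : ∀ (i : ℤ) (n : ℕ), x (i + r) n = x i n)
    (hzero : ∀ i : ℤ, x i 0 = 1)
    (hrel1 : ∀ (i : ℤ) (k : ℕ), x i (k + 1) * x (i + (k + 1 : ℕ)) 1 = x i (k + 2) + x i k)
    (hrel2 : ∀ (i : ℤ) (k : ℕ), x i 1 * x (i + 1) (k + 1) = x i (k + 2) + x (i + 2) k)
    (i j k l m : ℤ) (hj : 1 ≤ j) (hji : j ≤ i) (hir : i ≤ r) (hm : 0 ≤ m)
    (hl0 : 0 ≤ l) (hlr : l ≤ r - 1) (hk1 : 1 ≤ k) (hk2 : k ≤ m * r + l)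
    (hcase : k + i < r + j) (hlj1 : i ≤ l + j) (hlj2 : l + j ≤ k + i - 1) :
    x i k.toNat * x j (m * r + l).toNat =
      x j (m * r + k + i - j).toNat * x i (l + j - i).toNat +
      x j (m * r + i - j - 1).toNat * x (l + j + 1) (k + i - l - j - 1).toNat := by
  -- A reformulation of `hrel1` with flexible index/length arguments.
  have h1 : ∀ (a c : ℤ) (n n1 n2 : ℕ), c = a + n + 1 → n1 = n + 1 → n2 = n + 2 →
      x a n2 = x a n1 * x c 1 - x a n := by
    intro a c n n1 n2 hc hn1 hn2
    subst hn1; subst hn2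
    have h := hrel1 a n
    rw [show a + ((n + 1 : ℕ) : ℤ) = c by push_cast; omega] at h
    linear_combination -h
  -- The key "crossing" lemma, case t = 0.
  have hF : ∀ (u : ℕ) (a : ℤ) (s : ℕ),
      x a (u + s + 1) * x (a + s + 1) (u + 1)
        = x a (u + s + 2) * x (a + s + 1) u + x a s := by
    intro u
    induction u with
    | zero =>
      intro a s
      simp only [Nat.zero_add]
      rw [hzero, mul_one]
      have h := hrel1 a s
      rw [show a + ((s + 1 : ℕ) : ℤ) = a + s + 1 by push_cast; omega] at h
      linear_combination h
    | succ u ih =>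
      intro a s
      rw [show u + 1 + s + 1 = u + s + 2 from by omega,
          show u + 1 + s + 2 = u + s + 3 from by omega,
          show u + 1 + 1 = u + 2 from by omega]
      have e1 : x (a + (s:ℤ) + 1) (u + 2)
          = x (a + (s:ℤ) + 1) (u + 1) * x (a + u + s + 2) 1 - x (a + (s:ℤ) + 1) u :=
        h1 (a + s + 1) (a + u + s + 2) u (u + 1) (u + 2) (by push_cast; ring) rfl rfl
      have e2 : x a (u + s + 3)
          = x a (u + s + 2) * x (a + u + s + 2) 1 - x a (u + s + 1) :=
        h1 a (a + u + s + 2) (u + s + 1) (u + s + 2) (u + s + 3)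
          (by push_cast; ring) (by omega) (by omega)
      have hFu := ih a s
      linear_combination (x a (u + s + 2)) * e1 - (x (a + (s:ℤ) + 1) (u + 1)) * e2 + hFu
  -- The key "crossing" lemma, general form.
  have hG : ∀ (t : ℕ) (a : ℤ) (u s : ℕ),
      x a (u + s + 1) * x (a + s + 1) (u + t + 1)
        = x a (u + s + t + 2) * x (a + s + 1) u + x a s * x (a + u + s + 2) t := by
    intro t
    induction t using Nat.twoStepInduction with
    | zero =>
      intro a u s
      rw [show u + 0 + 1 = u + 1 from by omega, show u + s + 0 + 2 = u + s + 2 from by omega,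
          hzero, mul_one]
      exact hF u a s
    | one =>
      intro a u s
      rw [show u + 1 + 1 = u + 2 from by omega, show u + s + 1 + 2 = u + s + 3 from by omega]
      have e1 : x (a + (s:ℤ) + 1) (u + 2)
          = x (a + (s:ℤ) + 1) (u + 1) * x (a + u + s + 2) 1 - x (a + (s:ℤ) + 1) u :=
        h1 (a + s + 1) (a + u + s + 2) u (u + 1) (u + 2) (by push_cast; ring) rfl rfl
      have e2 : x a (u + s + 3)
          = x a (u + s + 2) * x (a + u + s + 2) 1 - x a (u + s + 1) :=
        h1 a (a + u + s + 2) (u + s + 1) (u + s + 2) (u + s + 3)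
          (by push_cast; ring) (by omega) (by omega)
      have hFu := hF u a s
      linear_combination (x a (u + s + 1)) * e1 - (x (a + (s:ℤ) + 1) u) * e2
        + (x (a + (u:ℤ) + s + 2) 1) * hFu
    | more t ih0 ih1 =>
      intro a u s
      rw [show u + (t + 2) + 1 = u + t + 3 from by omega,
          show u + s + (t + 2) + 2 = u + s + t + 4 from by omega]
      have e1 : x (a + (s:ℤ) + 1) (u + t + 3)
          = x (a + (s:ℤ) + 1) (u + t + 2) * x (a + u + s + t + 3) 1
            - x (a + (s:ℤ) + 1) (u + t + 1) :=
        h1 (a + s + 1) (a + u + s + t + 3) (u + t + 1) (u + t + 2) (u + t + 3)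
          (by push_cast; ring) (by omega) (by omega)
      have e2 : x a (u + s + t + 4)
          = x a (u + s + t + 3) * x (a + u + s + t + 3) 1 - x a (u + s + t + 2) :=
        h1 a (a + u + s + t + 3) (u + s + t + 2) (u + s + t + 3) (u + s + t + 4)
          (by push_cast; ring) (by omega) (by omega)
      have e3 : x (a + (u:ℤ) + s + 2) (t + 2)
          = x (a + (u:ℤ) + s + 2) (t + 1) * x (a + u + s + t + 3) 1
            - x (a + (u:ℤ) + s + 2) t :=
        h1 (a + u + s + 2) (a + u + s + t + 3) t (t + 1) (t + 2)
          (by push_cast; ring) rfl rfl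
      have g1 := ih1 a u s
      rw [show u + (t + 1) + 1 = u + t + 2 from by omega,
          show u + s + (t + 1) + 2 = u + s + t + 3 from by omega] at g1
      have g0 := ih0 a u s
      linear_combination (x a (u + s + 1)) * e1 - (x (a + (s:ℤ) + 1) u) * e2
        - (x a s) * e3 + (x (a + (u:ℤ) + s + t + 3) 1) * g1 - g0
  -- periodicity by natural multiples of r
  have hper' : ∀ (n : ℕ) (c : ℤ) (N : ℕ), x (c + n * r) N = x c N := by
    intro n
    induction n with
    | zero => intro c N; simp
    | succ n ih =>
      intro c N
      rw [show c + ((n + 1 : ℕ) : ℤ) * r = (c + n * r) + r by push_cast; ring, hper, ih]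
  -- set up the natural number parameters
  obtain ⟨p, hp⟩ : ∃ p : ℕ, (p : ℤ) = m * r :=
    ⟨(m * r).toNat, Int.toNat_of_nonneg (mul_nonneg hm (by linarith))⟩
  rw [← hp] at hk2 ⊢
  obtain ⟨M, hM⟩ : ∃ M : ℕ, (M : ℤ) = m := ⟨m.toNat, Int.toNat_of_nonneg hm⟩
  have hMr : (M : ℤ) * r = (p : ℤ) := by rw [hM, hp]
  obtain ⟨U, hU⟩ : ∃ U : ℕ, (U : ℤ) = l + j - i :=
    ⟨(l + j - i).toNat, Int.toNat_of_nonneg (by omega)⟩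
  obtain ⟨S, hS⟩ : ∃ S : ℕ, (S : ℤ) = (p : ℤ) + i - j - 1 :=
    ⟨((p : ℤ) + i - j - 1).toNat, Int.toNat_of_nonneg (by omega)⟩
  obtain ⟨T, hT⟩ : ∃ T : ℕ, (T : ℤ) = k + i - l - j - 1 :=
    ⟨(k + i - l - j - 1).toNat, Int.toNat_of_nonneg (by omega)⟩
  rw [show k.toNat = U + T + 1 from by omega,
      show ((p : ℤ) + l).toNat = U + S + 1 from by omega,
      show ((p : ℤ) + k + i - j).toNat = U + S + T + 2 from by omega,
      show (l + j - i).toNat = U from by omega,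
      show ((p : ℤ) + i - j - 1).toNat = S from by omega,
      show (k + i - l - j - 1).toNat = T from by omega]
  have key := hG T j U S
  have eA : ∀ N : ℕ, x (j + (S : ℤ) + 1) N = x i N := by
    intro N
    rw [show j + (S : ℤ) + 1 = i + (M : ℤ) * r by rw [hMr]; omega, hper']
  have eB : ∀ N : ℕ, x (j + (U : ℤ) + (S : ℤ) + 2) N = x (l + j + 1) N := by
    intro N
    rw [show j + (U : ℤ) + (S : ℤ) + 2 = (l + j + 1) + (M : ℤ) * r by rw [hMr]; omega, hper']
  simp only [eA, eB] at key
  linear_combination key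
end

section
/- Let i, j, k, l, m be integers with 1 ≤ i < j ≤ r, m ≥ 0, 0 ≤ l ≤ r−1, 1 ≤ k ≤ mr+l, and k ≥ j−i. Then x_{i,k}·x_{j,mr+l} = x_{i,j−i−1}·x_{k+i+1,mr+l+j−k−i−1} + x_{i,mr+l+j−i}·x_{j,k+i−j}. (Under these hypotheses all quasi-length subscripts appearing are nonnegative.) -/
theorem tube_G {R : Type*} [CommRing R] (z : ℤ → ℤ → R)
    (hz0 : ∀ i : ℤ, z i 0 = 1)
    (hzneg : ∀ (i n : ℤ), n < 0 → z i n = 0)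
    (hR1 : ∀ (i n : ℤ), 0 ≤ n → z i n * z (i + n) 1 = z i (n + 1) + z i (n - 1))
    (hR2 : ∀ (i n : ℤ), 0 ≤ n → z i 1 * z (i + 1) n = z i (n + 1) + z (i + 2) (n - 1)) :
    ∀ (d : ℕ) (i t : ℤ), 0 ≤ t →
      z i d * z (i + d) (d + t) = z i (d - 1) * z (i + d + 1) (d + t - 1) + z i (2 * d + t) := by
  intro d
  induction d with
  | zero =>
    intro i t ht
    push_cast
    rw [hz0, hzneg i (-1) (by norm_num)]
    simp
  | succ d ih =>
    intro i t ht
    have eqA := hR1 i d (by positivity)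
    have eqB := hR2 (i + d) (d + 1 + t) (by positivity)
    have eqC := ih i (t + 2) (by linarith)
    push_cast
    linear_combination (norm := ring_nf)
      (-(z (i + d + 1) (d + 1 + t))) * eqA + z i (d : ℤ) * eqB + eqC

theorem tube_H {R : Type*} [CommRing R] (z : ℤ → ℤ → R)
    (hz0 : ∀ i : ℤ, z i 0 = 1)
    (hzneg : ∀ (i n : ℤ), n < 0 → z i n = 0)
    (hR1 : ∀ (i n : ℤ), 0 ≤ n → z i n * z (i + n) 1 = z i (n + 1) + z i (n - 1))
    (hR2 : ∀ (i n : ℤ), 0 ≤ n → z i 1 * z (i + 1) n = z i (n + 1) + z (i + 2) (n - 1)) :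
    ∀ (n d : ℕ) (i t : ℤ), 0 ≤ t →
      z i (d + n - 1) * z (i + d) (d + n - 1 + t) =
        z i (d - 1) * z (i + d + n) (d + t - 1) +
          z i (2 * d + n - 1 + t) * z (i + d) (n - 1) := by
  have key : ∀ n : ℕ,
      (∀ (d : ℕ) (i t : ℤ), 0 ≤ t →
        z i (d + (n : ℤ) - 1) * z (i + d) (d + n - 1 + t) =
          z i (d - 1) * z (i + d + n) (d + t - 1) +
            z i (2 * d + n - 1 + t) * z (i + d) ((n : ℤ) - 1)) ∧
      (∀ (d : ℕ) (i t : ℤ), 0 ≤ t →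
        z i (d + ((n : ℤ) + 1) - 1) * z (i + d) (d + (n + 1) - 1 + t) =
          z i (d - 1) * z (i + d + (n + 1)) (d + t - 1) +
            z i (2 * d + (n + 1) - 1 + t) * z (i + d) ((n : ℤ) + 1 - 1)) := by
    intro n
    induction n with
    | zero =>
      constructor
      · intro d i t ht
        push_cast
        rw [hzneg (i + d) (-1) (by norm_num)]
        ring_nf
      · intro d i t ht
        have hG := tube_G z hz0 hzneg hR1 hR2 d i t ht
        push_cast
        rw [hz0 (i + d)]
        linear_combination (norm := ring_nf) hG
    | succ n ih =>
      refine ⟨ih.2, ?_⟩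
      intro d i t ht
      have eqD := hR1 i (d + n) (by positivity)
      have eqE := ih.2 d i (t + 1) (by linarith)
      have eqF := ih.1 d i (t + 2) (by linarith)
      have eqG2 := hR2 (i + d + n) (d + t) (by positivity)
      have eqH2 := hR1 (i + d) n (by positivity)
      push_cast at eqD eqE eqF eqG2 eqH2 ⊢
      linear_combination (norm := ring_nf)
        (-(z (i + d) ((d : ℤ) + n + t + 1))) * eqD
        + z (i + (d : ℤ) + n) 1 * eqE
        + (-1 : R) * eqF
        + z i ((d : ℤ) - 1) * eqG2
        + z i (2 * (d : ℤ) + n + t + 1) * eqH2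
  intro n
  exact (key n).1



/-- Theorem 7.1(2)1) of the paper. In a tube of rank `r`, for integers
`1 ≤ i < j ≤ r`, `m ≥ 0`, `0 ≤ l ≤ r-1`, `1 ≤ k ≤ mr+l` and `k ≥ j-i`:
`X_{E_i[k]}·X_{E_j[mr+l]} = X_{E_i[j-i-1]}·X_{E_{k+i+1}[mr+l+j-k-i-1]}
  + X_{E_i[mr+l+j-i]}·X_{E_j[k+i-j]}`. -/
theorem tube_inductive_formula_case2a {R : Type*} [CommRing R] (r : ℤ) (hr : 1 ≤ r)
    (x : ℤ → ℕ → R)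
    (hper : ∀ (i : ℤ) (n : ℕ), x (i + r) n = x i n)
    (hzero : ∀ i : ℤ, x i 0 = 1)
    (hrel1 : ∀ (i : ℤ) (k : ℕ), x i (k + 1) * x (i + (k + 1 : ℕ)) 1 = x i (k + 2) + x i k)
    (hrel2 : ∀ (i : ℤ) (k : ℕ), x i 1 * x (i + 1) (k + 1) = x i (k + 2) + x (i + 2) k)
    (i j k l m : ℤ) (hi : 1 ≤ i) (hij : i < j) (hjr : j ≤ r) (hm : 0 ≤ m)
    (hl0 : 0 ≤ l) (hlr : l ≤ r - 1) (hk1 : 1 ≤ k) (hk2 : k ≤ m * r + l)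
    (hcase : j - i ≤ k) :
    x i k.toNat * x j (m * r + l).toNat =
      x i (j - i - 1).toNat * x (k + i + 1) (m * r + l + j - k - i - 1).toNat +
      x i (m * r + l + j - i).toNat * x j (k + i - j).toNat := by
  set z : ℤ → ℤ → R := fun a n => if 0 ≤ n then x a n.toNat else 0 with hzdef
  have hz : ∀ (a n : ℤ), 0 ≤ n → z a n = x a n.toNat := by
    intro a n hn; simp [hzdef, hn]
  have hz0 : ∀ a : ℤ, z a 0 = 1 := by
    intro a; simp [hzdef, hzero]
  have hzneg : ∀ (a n : ℤ), n < 0 → z a n = 0 := by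
    intro a n hn; simp [hzdef, not_le.2 hn]
  have hR1 : ∀ (a n : ℤ), 0 ≤ n → z a n * z (a + n) 1 = z a (n + 1) + z a (n - 1) := by
    intro a n hn
    lift n to ℕ using hn with nn
    cases nn with
    | zero =>
      norm_num
      rw [hz0, hzneg a (-1) (by norm_num)]
      ring
    | succ p =>
      rw [hz a _ (by positivity), hz (a + _) _ (by norm_num),
        hz a _ (by positivity), hz a _ (by push_cast; omega)]
      have := hrel1 a p
      convert this using 3 <;> push_cast <;> omega
  have hR2 : ∀ (a n : ℤ), 0 ≤ n → z a 1 * z (a + 1) n = z a (n + 1) + z (a + 2) (n - 1) := by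
    intro a n hn
    lift n to ℕ using hn with nn
    cases nn with
    | zero =>
      norm_num
      rw [hz0, hzneg (a + 2) (-1) (by norm_num)]
      ring
    | succ p =>
      rw [hz a 1 (by norm_num), hz (a + 1) _ (by positivity),
        hz a _ (by positivity), hz (a + 2) _ (by push_cast; omega)]
      have := hrel2 a p
      convert this using 3 <;> push_cast <;> omega
  set d0 : ℕ := (j - i).toNat with hd0def
  set s0 : ℕ := (k - (j - i)).toNat with hs0def
  have hd0 : (d0 : ℤ) = j - i := Int.toNat_of_nonneg (by omega)
  have hs0 : (s0 : ℤ) = k - (j - i) := Int.toNat_of_nonneg (by omega)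
  have key := tube_H z hz0 hzneg hR1 hR2 (s0 + 1) d0 i (m * r + l - k) (by omega)
  have e3 : (↑d0 + ↑(s0 + 1) - 1 + (m * r + l - k) : ℤ) = m * r + l := by push_cast; omega
  have e1 : ((↑d0 : ℤ) + ↑(s0 + 1) - 1 : ℤ) = k := by push_cast; omega
  have e6 : ((↑d0 : ℤ) + (m * r + l - k) - 1 : ℤ) = m * r + l + j - k - i - 1 := by
    push_cast; omega
  have e5 : (i + (↑d0 : ℤ) + ↑(s0 + 1) : ℤ) = k + i + 1 := by push_cast; omega
  have e2 : (i + (↑d0 : ℤ) : ℤ) = j := by push_cast; omega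
  have e4 : ((↑d0 : ℤ) - 1 : ℤ) = j - i - 1 := by push_cast; omega
  have e7 : (2 * (↑d0 : ℤ) + ↑(s0 + 1) - 1 + (m * r + l - k) : ℤ) = m * r + l + j - i := by
    push_cast; omega
  have e8 : ((↑(s0 + 1) : ℤ) - 1 : ℤ) = k + i - j := by push_cast; omega
  rw [e3, e1, e6, e5, e2, e4, e7, e8] at key
  rw [hz i k (by omega), hz j (m * r + l) (by omega), hz i (j - i - 1) (by omega),
    hz (k + i + 1) (m * r + l + j - k - i - 1) (by omega),
    hz i (m * r + l + j - i) (by omega), hz j (k + i - j) (by omega)] at key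
  exact key
end

section
/- Let i, j, k, l, m be integers with 1 ≤ i < j ≤ r, m ≥ 0, 0 ≤ l ≤ r−1, 1 ≤ k ≤ mr+l, k < j−i, and i ≤ l+j−r ≤ k+i−1. Then x_{i,k}·x_{j,mr+l} = x_{j,(m+1)r+k+i−j}·x_{i,l+j−r−i} + x_{j,(m+1)r+i−j−1}·x_{l+j+1,k+r+i−l−j−1}. (Under these hypotheses all quasi-length subscripts appearing are nonnegative.) -/
namespace TubeAux

variable {R : Type*} [CommRing R]

noncomputable def Xe (x : ℤ → ℕ → R) : ℤ → ℤ → R := fun a n =>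
  if 0 ≤ n then x a n.toNat else if n = -1 then 0 else if n = -2 then -1 else 0

lemma Xe_coe (x : ℤ → ℕ → R) (a : ℤ) (n : ℕ) : Xe x a (n : ℤ) = x a n := by
  simp [Xe]

lemma Xe_toNat (x : ℤ → ℕ → R) (a n : ℤ) (h : 0 ≤ n) : Xe x a n = x a n.toNat := by
  simp [Xe, h]

lemma Xe_neg_one (x : ℤ → ℕ → R) (a : ℤ) : Xe x a (-1) = 0 := by norm_num [Xe]

lemma Xe_neg_two (x : ℤ → ℕ → R) (a : ℤ) : Xe x a (-2) = -1 := by norm_num [Xe]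

lemma recR (x : ℤ → ℕ → R) (hzero : ∀ i : ℤ, x i 0 = 1)
    (hrel1 : ∀ (i : ℤ) (k : ℕ), x i (k + 1) * x (i + (k + 1 : ℕ)) 1 = x i (k + 2) + x i k)
    (a b p n q : ℤ) (hn : -1 ≤ n) (hb : b = a + n) (hp : p = n + 1) (hq : q = n - 1) :
    Xe x a p = Xe x a n * x b 1 - Xe x a q := by
  subst hb hp hq
  rcases eq_or_lt_of_le hn with h | h
  · rw [← h]; norm_num [Xe, hzero]
  · have h0 : 0 ≤ n := by omega
    obtain ⟨k, rfl⟩ := Int.eq_ofNat_of_zero_le h0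
    cases k with
    | zero => norm_num [Xe, hzero]
    | succ k =>
      rw [show ((k+1:ℕ):ℤ) + 1 = ((k+2:ℕ):ℤ) by push_cast; ring,
          show ((k+1:ℕ):ℤ) - 1 = ((k:ℕ):ℤ) by push_cast; ring,
          Xe_coe, Xe_coe, Xe_coe]
      linear_combination (-1 : R) * hrel1 a k

lemma recL (x : ℤ → ℕ → R) (hzero : ∀ i : ℤ, x i 0 = 1)
    (hrel2 : ∀ (i : ℤ) (k : ℕ), x i 1 * x (i + 1) (k + 1) = x i (k + 2) + x (i + 2) k)
    (a b c p n q : ℤ) (hn : -1 ≤ n) (hb : b = a + 1) (hc : c = a + 2)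
    (hp : p = n + 1) (hq : q = n - 1) :
    Xe x a p = x a 1 * Xe x b n - Xe x c q := by
  subst hb hc hp hq
  rcases eq_or_lt_of_le hn with h | h
  · rw [← h]; norm_num [Xe, hzero]
  · have h0 : 0 ≤ n := by omega
    obtain ⟨k, rfl⟩ := Int.eq_ofNat_of_zero_le h0
    cases k with
    | zero => norm_num [Xe, hzero]
    | succ k =>
      rw [show ((k+1:ℕ):ℤ) + 1 = ((k+2:ℕ):ℤ) by push_cast; ring,
          show ((k+1:ℕ):ℤ) - 1 = ((k:ℕ):ℤ) by push_cast; ring,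
          Xe_coe, Xe_coe, Xe_coe]
      linear_combination (-1 : R) * hrel2 a k


lemma euler (x : ℤ → ℕ → R) (hzero : ∀ i : ℤ, x i 0 = 1)
    (hrel1 : ∀ (i : ℤ) (k : ℕ), x i (k + 1) * x (i + (k + 1 : ℕ)) 1 = x i (k + 2) + x i k)
    (t : ℕ) : ∀ (a s : ℤ), 1 ≤ s →
    Xe x a (s + (t:ℤ)) = Xe x a s * Xe x (a+s) (t:ℤ)
      - Xe x a (s-1) * Xe x (a+s+1) ((t:ℤ)-1) := by
  induction t using Nat.twoStepInduction with
  | zero =>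
    intro a s hs
    rw [show ((0:ℕ):ℤ) - 1 = -1 by norm_num, Xe_neg_one,
        show s + ((0:ℕ):ℤ) = s by push_cast; ring, Xe_coe, hzero]
    ring
  | one =>
    intro a s hs
    have h1 := recR x hzero hrel1 a (a+s) (s+((1:ℕ):ℤ)) s (s-1) (by omega) (by push_cast; ring)
      (by norm_num) (by ring)
    rw [Xe_coe, show ((1:ℕ):ℤ) - 1 = ((0:ℕ):ℤ) by norm_num, Xe_coe, hzero]
    linear_combination h1
  | more u ih1 ih2 =>
    intro a s hs
    have c2 : ((u+2:ℕ):ℤ) = (u:ℤ)+2 := by push_cast; ring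
    have c1 : ((u+1:ℕ):ℤ) = (u:ℤ)+1 := by push_cast; ring
    have E1 := ih1 a s hs
    have E2 := ih2 a s hs
    rw [c1, show (u:ℤ)+1-1 = (u:ℤ) by ring] at E2
    rw [c2, show (u:ℤ)+2-1 = (u:ℤ)+1 by ring]
    have h1 := recR x hzero hrel1 a (a+s+((u:ℤ)+1)) (s+((u:ℤ)+2)) (s+((u:ℤ)+1)) (s+(u:ℤ))
      (by omega) (by ring) (by ring) (by ring)
    have h2 := recR x hzero hrel1 (a+s) (a+s+((u:ℤ)+1)) ((u:ℤ)+2) ((u:ℤ)+1) (u:ℤ)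
      (by omega) (by ring) (by ring) (by ring)
    have h3 := recR x hzero hrel1 (a+s+1) (a+s+((u:ℤ)+1)) ((u:ℤ)+1) (u:ℤ) ((u:ℤ)-1)
      (by omega) (by ring) (by ring) (by ring)
    linear_combination h1 + x (a+s+((u:ℤ)+1)) 1 * E2 - E1 - Xe x a s * h2 + Xe x a (s-1) * h3

lemma euler' (x : ℤ → ℕ → R) (hzero : ∀ i : ℤ, x i 0 = 1)
    (hrel1 : ∀ (i : ℤ) (k : ℕ), x i (k + 1) * x (i + (k + 1 : ℕ)) 1 = x i (k + 2) + x i k)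
    (a s t p b c q u : ℤ) (hs : 1 ≤ s) (ht : 0 ≤ t) (hp : p = s + t) (hb : b = a + s)
    (hc : c = a + s + 1) (hq : q = s - 1) (hu : u = t - 1) :
    Xe x a p = Xe x a s * Xe x b t - Xe x a q * Xe x c u := by
  subst hp hb hc hq hu
  obtain ⟨w, rfl⟩ := Int.eq_ofNat_of_zero_le ht
  exact euler x hzero hrel1 w a s hs


lemma ptol (x : ℤ → ℕ → R) (hzero : ∀ i : ℤ, x i 0 = 1)
    (hrel1 : ∀ (i : ℤ) (k : ℕ), x i (k + 1) * x (i + (k + 1 : ℕ)) 1 = x i (k + 2) + x i k)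
    (hrel2 : ∀ (i : ℤ) (k : ℕ), x i 1 * x (i + 1) (k + 1) = x i (k + 2) + x (i + 2) k)
    (t : ℕ) : ∀ (a s q : ℤ), 1 ≤ s → 0 ≤ q → (t:ℤ) - 1 ≤ q →
    Xe x a (s + (t:ℤ)) * Xe x (a+s) q
      = Xe x a (s + q) * Xe x (a+s) (t:ℤ)
        + Xe x a (s-1) * Xe x (a+s+(t:ℤ)+1) (q - (t:ℤ) - 1) := by
  induction t using Nat.twoStepInduction with
  | zero =>
    intro a s q hs hq0 _
    rw [show s + ((0:ℕ):ℤ) = s by norm_num, Xe_coe, hzero,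
        show a+s+((0:ℕ):ℤ)+1 = a+s+1 by norm_num,
        show q - ((0:ℕ):ℤ) - 1 = q - 1 by norm_num]
    have hE := euler' x hzero hrel1 a s q (s+q) (a+s) (a+s+1) (s-1) (q-1) hs hq0 rfl rfl rfl rfl rfl
    linear_combination -hE
  | one =>
    intro a s q hs hq0 _
    rw [Xe_coe, show a+s+((1:ℕ):ℤ)+1 = a+s+2 by push_cast; ring,
        show q - ((1:ℕ):ℤ) - 1 = q - 2 by push_cast; ring]
    have h1 := recR x hzero hrel1 a (a+s) (s+((1:ℕ):ℤ)) s (s-1) (by omega) (by ring)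
      (by norm_num) (by ring)
    have hE := euler' x hzero hrel1 a s q (s+q) (a+s) (a+s+1) (s-1) (q-1) hs hq0 rfl rfl rfl rfl rfl
    have hL := recL x hzero hrel2 (a+s) (a+s+1) (a+s+2) q (q-1) (q-2) (by omega) (by ring)
      (by ring) (by ring) (by ring)
    linear_combination Xe x (a+s) q * h1 - x (a+s) 1 * hE - Xe x a (s-1) * hL
  | more u ih1 ih2 =>
    intro a s q hs hq0 htq
    have c2 : ((u+2:ℕ):ℤ) = (u:ℤ)+2 := by push_cast; ring
    have c1 : ((u+1:ℕ):ℤ) = (u:ℤ)+1 := by push_cast; ring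
    have P0 := ih1 a s q hs hq0 (by omega)
    have P1 := ih2 a s q hs hq0 (by omega)
    rw [c1, show a+s+((u:ℤ)+1)+1 = a+s+(u:ℤ)+2 by ring,
        show q-((u:ℤ)+1)-1 = q-(u:ℤ)-2 by ring] at P1
    rw [c2, show a+s+((u:ℤ)+2)+1 = a+s+(u:ℤ)+3 by ring,
        show q-((u:ℤ)+2)-1 = q-(u:ℤ)-3 by ring]
    have h1 := recR x hzero hrel1 a (a+s+(u:ℤ)+1) (s+((u:ℤ)+2)) (s+((u:ℤ)+1)) (s+(u:ℤ))
      (by omega) (by ring) (by ring) (by ring)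
    have h2 := recR x hzero hrel1 (a+s) (a+s+(u:ℤ)+1) ((u:ℤ)+2) ((u:ℤ)+1) (u:ℤ)
      (by omega) (by ring) (by ring) (by ring)
    have h3 := recL x hzero hrel2 (a+s+(u:ℤ)+1) (a+s+(u:ℤ)+2) (a+s+(u:ℤ)+3)
      (q-(u:ℤ)-1) (q-(u:ℤ)-2) (q-(u:ℤ)-3) (by omega) (by ring) (by ring) (by ring) (by ring)
    linear_combination Xe x (a+s) q * h1 + x (a+s+(u:ℤ)+1) 1 * P1 - P0
      - Xe x a (s+q) * h2 - Xe x a (s-1) * h3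

lemma ptol' (x : ℤ → ℕ → R) (hzero : ∀ i : ℤ, x i 0 = 1)
    (hrel1 : ∀ (i : ℤ) (k : ℕ), x i (k + 1) * x (i + (k + 1 : ℕ)) 1 = x i (k + 2) + x i k)
    (hrel2 : ∀ (i : ℤ) (k : ℕ), x i 1 * x (i + 1) (k + 1) = x i (k + 2) + x (i + 2) k)
    (a s t q p c w d e f : ℤ) (hs : 1 ≤ s) (ht : 0 ≤ t) (hq0 : 0 ≤ q) (htq : t - 1 ≤ q)
    (hp : p = s + t) (hc : c = a + s) (hw : w = s + q) (hd : d = s - 1)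
    (he : e = a + s + t + 1) (hf : f = q - t - 1) :
    Xe x a p * Xe x c q = Xe x a w * Xe x c t + Xe x a d * Xe x e f := by
  subst hp hc hw hd he hf
  obtain ⟨v, rfl⟩ := Int.eq_ofNat_of_zero_le ht
  exact ptol x hzero hrel1 hrel2 v a s q hs hq0 htq


lemma Xe_per (x : ℤ → ℕ → R) (r : ℤ) (hper : ∀ (i : ℤ) (n : ℕ), x (i + r) n = x i n)
    (a n : ℤ) : Xe x (a + r) n = Xe x a n := by
  simp only [Xe, hper]

lemma perN (x : ℤ → ℕ → R) (r : ℤ) (hper : ∀ (i : ℤ) (n : ℕ), x (i + r) n = x i n) :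
    ∀ (c : ℕ) (a n : ℤ), Xe x (a + (c:ℤ)*r) n = Xe x a n := by
  intro c
  induction c with
  | zero => intro a n; norm_num
  | succ c ih =>
    intro a n
    rw [show a + ((c+1:ℕ):ℤ)*r = (a + (c:ℕ)*r) + r by push_cast; ring,
        Xe_per x r hper, ih]

lemma per' (x : ℤ → ℕ → R) (r : ℤ) (hper : ∀ (i : ℤ) (n : ℕ), x (i + r) n = x i n)
    (a b c n : ℤ) (hc : 0 ≤ c) (hb : b = a + c*r) : Xe x b n = Xe x a n := by
  subst hb
  obtain ⟨w, rfl⟩ := Int.eq_ofNat_of_zero_le hc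
  exact perN x r hper w a n

end TubeAux


/-- Theorem 7.1(2)2) of the paper. In a tube of rank `r`, for integers
`1 ≤ i < j ≤ r`, `m ≥ 0`, `0 ≤ l ≤ r-1`, `1 ≤ k ≤ mr+l`, `k < j-i` and
`i ≤ l+j-r ≤ k+i-1`:
`X_{E_i[k]}·X_{E_j[mr+l]} = X_{E_j[(m+1)r+k+i-j]}·X_{E_i[l+j-r-i]}
  + X_{E_j[(m+1)r+i-j-1]}·X_{E_{l+j+1}[k+r+i-l-j-1]}`. -/
theorem tube_inductive_formula_case2b {R : Type*} [CommRing R] (r : ℤ) (hr : 1 ≤ r)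
    (x : ℤ → ℕ → R)
    (hper : ∀ (i : ℤ) (n : ℕ), x (i + r) n = x i n)
    (hzero : ∀ i : ℤ, x i 0 = 1)
    (hrel1 : ∀ (i : ℤ) (k : ℕ), x i (k + 1) * x (i + (k + 1 : ℕ)) 1 = x i (k + 2) + x i k)
    (hrel2 : ∀ (i : ℤ) (k : ℕ), x i 1 * x (i + 1) (k + 1) = x i (k + 2) + x (i + 2) k)
    (i j k l m : ℤ) (hi : 1 ≤ i) (hij : i < j) (hjr : j ≤ r) (hm : 0 ≤ m)
    (hl0 : 0 ≤ l) (hlr : l ≤ r - 1) (hk1 : 1 ≤ k) (hk2 : k ≤ m * r + l)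
    (hcase : k < j - i) (hlj1 : i ≤ l + j - r) (hlj2 : l + j - r ≤ k + i - 1) :
    x i k.toNat * x j (m * r + l).toNat =
      x j ((m + 1) * r + k + i - j).toNat * x i (l + j - r - i).toNat +
      x j ((m + 1) * r + i - j - 1).toNat * x (l + j + 1) (k + r + i - l - j - 1).toNat := by
  have hmr : 0 ≤ m * r := mul_nonneg hm (by omega)
  have hE1 : (m + 1) * r = m * r + r := by ring
  have hs : 1 ≤ (m + 1) * r + i - j := by linarith
  have H := TubeAux.ptol' x hzero hrel1 hrel2 j ((m+1)*r + i - j) (l+j-r-i) k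
      (m*r+l) (i+(m+1)*r) ((m+1)*r+k+i-j) ((m+1)*r+i-j-1) (l+j+1+m*r) (k+r+i-l-j-1)
      hs (by linarith) (by linarith) (by linarith)
      (by ring) (by ring) (by ring) (by ring) (by ring) (by ring)
  have p1 := TubeAux.per' x r hper i (i+(m+1)*r) (m+1) k (by linarith) (by ring)
  have p2 := TubeAux.per' x r hper i (i+(m+1)*r) (m+1) (l+j-r-i) (by linarith) (by ring)
  have p3 := TubeAux.per' x r hper (l+j+1) (l+j+1+m*r) m (k+r+i-l-j-1) hm (by ring)
  rw [p1, p2, p3] at H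
  rw [show x i k.toNat = TubeAux.Xe x i k from (TubeAux.Xe_toNat x i k (by linarith)).symm,
      show x j (m*r+l).toNat = TubeAux.Xe x j (m*r+l) from
        (TubeAux.Xe_toNat x j (m*r+l) (by linarith)).symm,
      show x j ((m+1)*r+k+i-j).toNat = TubeAux.Xe x j ((m+1)*r+k+i-j) from
        (TubeAux.Xe_toNat x j ((m+1)*r+k+i-j) (by linarith)).symm,
      show x i (l+j-r-i).toNat = TubeAux.Xe x i (l+j-r-i) from
        (TubeAux.Xe_toNat x i (l+j-r-i) (by linarith)).symm,
      show x j ((m+1)*r+i-j-1).toNat = TubeAux.Xe x j ((m+1)*r+i-j-1) from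
        (TubeAux.Xe_toNat x j ((m+1)*r+i-j-1) (by linarith)).symm,
      show x (l+j+1) (k+r+i-l-j-1).toNat = TubeAux.Xe x (l+j+1) (k+r+i-l-j-1) from
        (TubeAux.Xe_toNat x (l+j+1) (k+r+i-l-j-1) (by linarith)).symm]
  linear_combination H
end

section
/- Take r = 3. For all integers m ≥ 0 and n ≥ 3m+2: x_{2,3m+2}·x_{1,n} = Σ_{s=0}^{2m+1} t_s, where t_s = x_{2,n+3m+2−3s} if s is even and t_s = x_{2,1}·x_{2,n+3m+2−3s} if s is odd; that is, X_{E_2[3m+2]}X_{E_1[n]} = X_{E_2[n+3m+2]} + X_{E_2}X_{E_2[n+3m−1]} + X_{E_2[n+3m−4]} + ⋯ + X_{E_2[n−3m+2]} + X_{E_2}X_{E_2[n−3m−1]}. -/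
section
variable {R : Type*} [CommRing R] (x : ℤ → ℕ → R)

lemma rtube_key (hper : ∀ (i : ℤ) (n : ℕ), x (i + 3) n = x i n)
    (hrel2 : ∀ (i : ℤ) (k : ℕ), x i 1 * x (i + 1) (k + 1) = x i (k + 2) + x (i + 2) k)
    (k : ℕ) :
    (x 0 1 * x 1 1 * x 2 1 - x 0 1 - x 1 1 - x 2 1) * x 2 (k + 3)
      = x 2 (k + 6) + x 2 k := by
  have p0 : ∀ n, x 3 n = x 0 n := fun n => by simpa using hper 0 n
  have p1 : ∀ n, x 4 n = x 1 n := fun n => by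
    have := hper 1 n; norm_num at this; exact this
  have h1 := hrel2 1 (k + 2)
  norm_num [p0] at h1
  have h2 := hrel2 0 (k + 3)
  norm_num at h2
  have h3 := hrel2 2 (k + 1)
  norm_num [p0, p1] at h3
  have h4 := hrel2 0 k
  norm_num at h4
  have h5 := hrel2 2 (k + 4)
  norm_num [p0, p1] at h5
  linear_combination (x 0 1 * x 2 1) * h1 + x 2 1 * h2 + x 0 1 * h3 + h4 + h5 - h1

lemma rtube_key2 (hper : ∀ (i : ℤ) (n : ℕ), x (i + 3) n = x i n)
    (hzero : ∀ i : ℤ, x i 0 = 1)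
    (hrel1 : ∀ (i : ℤ) (k : ℕ), x i (k + 1) * x (i + (k + 1 : ℕ)) 1 = x i (k + 2) + x i k)
    (hrel2 : ∀ (i : ℤ) (k : ℕ), x i 1 * x (i + 1) (k + 1) = x i (k + 2) + x (i + 2) k) :
    (x 0 1 * x 1 1 * x 2 1 - x 0 1 - x 1 1 - x 2 1) * x 2 2 = x 2 5 := by
  have p0 : ∀ n, x 3 n = x 0 n := fun n => by simpa using hper 0 n
  have p1 : ∀ n, x 4 n = x 1 n := fun n => by
    have := hper 1 n; norm_num at this; exact this
  have hb := hrel2 1 1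
  norm_num [p0] at hb
  have ha := hrel2 0 2
  norm_num at ha
  have hc := hrel2 2 3
  norm_num [p0, p1] at hc
  have h22 := hrel1 2 0
  norm_num [p0, hzero] at h22
  linear_combination (x 0 1 * x 2 1) * hb + x 2 1 * ha + hc - hb + x 0 1 * h22

lemma rtube_aux0 (hper : ∀ (i : ℤ) (n : ℕ), x (i + 3) n = x i n)
    (hzero : ∀ i : ℤ, x i 0 = 1)
    (hrel1 : ∀ (i : ℤ) (k : ℕ), x i (k + 1) * x (i + (k + 1 : ℕ)) 1 = x i (k + 2) + x i k)
    (hrel2 : ∀ (i : ℤ) (k : ℕ), x i 1 * x (i + 1) (k + 1) = x i (k + 2) + x (i + 2) k)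
    (n' : ℕ) :
    x 2 2 * x 1 (n' + 2) = x 2 1 * x 2 (n' + 1) + x 2 (n' + 4) := by
  have p0 : ∀ n, x 3 n = x 0 n := fun n => by simpa using hper 0 n
  have p1 : ∀ n, x 4 n = x 1 n := fun n => by
    have := hper 1 n; norm_num at this; exact this
  have r2 := hrel2 0 (n' + 1)
  norm_num at r2
  have r3 := hrel2 2 (n' + 2)
  norm_num [p0, p1] at r3
  have h22 := hrel1 2 0
  norm_num [p0, hzero] at h22
  linear_combination x 2 1 * r2 + r3 - x 1 (n' + 2) * h22

lemma rtube_aux (hper : ∀ (i : ℤ) (n : ℕ), x (i + 3) n = x i n)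
    (hzero : ∀ i : ℤ, x i 0 = 1)
    (hrel1 : ∀ (i : ℤ) (k : ℕ), x i (k + 1) * x (i + (k + 1 : ℕ)) 1 = x i (k + 2) + x i k)
    (hrel2 : ∀ (i : ℤ) (k : ℕ), x i 1 * x (i + 1) (k + 1) = x i (k + 2) + x (i + 2) k)
    (m : ℕ) : ∀ n' : ℕ,
    x 2 (3 * m + 2) * x 1 (n' + 3 * m + 2) =
      ∑ s ∈ Finset.range (2 * m + 2),
        if s % 2 = 0 then x 2 1 * x 2 (n' + 1 + 3 * s) else x 2 (n' + 1 + 3 * s) := by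
  induction m using Nat.twoStepInduction with
  | zero =>
    intro n'
    norm_num [Finset.sum_range_succ]
    have e := rtube_aux0 x hper hzero hrel1 hrel2 n'
    linear_combination e
  | one =>
    intro n'
    norm_num [Finset.sum_range_succ]
    have e0 := rtube_aux0 x hper hzero hrel1 hrel2 (n' + 3)
    have e1 : n' + 3 + 2 = n' + 5 := by ring
    have e2 : n' + 3 + 1 = n' + 4 := by ring
    have e3 : n' + 3 + 4 = n' + 7 := by ring
    rw [e1, e2, e3] at e0
    have k2 := rtube_key2 x hper hzero hrel1 hrel2
    have kA := rtube_key x hper hrel2 (n' + 1)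
    have a1 : n' + 1 + 3 = n' + 4 := by ring
    have a2 : n' + 1 + 6 = n' + 7 := by ring
    rw [a1, a2] at kA
    have kB := rtube_key x hper hrel2 (n' + 4)
    have a3 : n' + 4 + 3 = n' + 7 := by ring
    have a4 : n' + 4 + 6 = n' + 10 := by ring
    rw [a3, a4] at kB
    linear_combination (-(x 1 (n' + 5))) * k2
      + (x 0 1 * x 1 1 * x 2 1 - x 0 1 - x 1 1 - x 2 1) * e0 + x 2 1 * kA + kB
  | more m ih1 ih2 =>
    intro n'
    have hA : 3 * (m + 2) + 2 = 3 * m + 8 := by ring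
    have hB : n' + 3 * (m + 2) + 2 = n' + 3 * m + 8 := by ring
    have hC : 2 * (m + 2) + 2 = 2 * m + 6 := by ring
    rw [hA, hB, hC]
    -- e1 : product with quasi-length 3m+5
    have e1 := ih2 (n' + 3)
    have f1 : 3 * (m + 1) + 2 = 3 * m + 5 := by ring
    have f2 : n' + 3 + 3 * (m + 1) + 2 = n' + 3 * m + 8 := by ring
    have f3 : 2 * (m + 1) + 2 = 2 * m + 4 := by ring
    rw [f1, f2, f3] at e1
    simp only [show ∀ s : ℕ, n' + 3 + 1 + 3 * s = n' + 4 + 3 * s from fun s => by ring] at e1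
    -- e2 : product with quasi-length 3m+2
    have e2 := ih1 (n' + 6)
    have g2 : n' + 6 + 3 * m + 2 = n' + 3 * m + 8 := by ring
    rw [g2] at e2
    simp only [show ∀ s : ℕ, n' + 6 + 1 + 3 * s = n' + 7 + 3 * s from fun s => by ring] at e2
    -- e3 : recursion on quasi-length
    have e3 := rtube_key x hper hrel2 (3 * m + 2)
    have g3 : 3 * m + 2 + 3 = 3 * m + 5 := by ring
    have g4 : 3 * m + 2 + 6 = 3 * m + 8 := by ring
    rw [g3, g4] at e3
    have kk : ∀ s : ℕ, (x 0 1 * x 1 1 * x 2 1 - x 0 1 - x 1 1 - x 2 1) * x 2 (n' + 4 + 3 * s)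
        = x 2 (n' + 7 + 3 * s) + x 2 (n' + 1 + 3 * s) := by
      intro s
      have h := rtube_key x hper hrel2 (n' + 1 + 3 * s)
      have b1 : n' + 1 + 3 * s + 3 = n' + 4 + 3 * s := by ring
      have b2 : n' + 1 + 3 * s + 6 = n' + 7 + 3 * s := by ring
      rw [b1, b2] at h
      exact h
    have expand : x 2 (3 * m + 8) * x 1 (n' + 3 * m + 8)
        = (x 0 1 * x 1 1 * x 2 1 - x 0 1 - x 1 1 - x 2 1)
            * (x 2 (3 * m + 5) * x 1 (n' + 3 * m + 8))
          - x 2 (3 * m + 2) * x 1 (n' + 3 * m + 8) := by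
      linear_combination (-(x 1 (n' + 3 * m + 8))) * e3
    rw [expand, e1, e2, Finset.mul_sum]
    have tf : ∀ s : ℕ, (x 0 1 * x 1 1 * x 2 1 - x 0 1 - x 1 1 - x 2 1)
          * (if s % 2 = 0 then x 2 1 * x 2 (n' + 4 + 3 * s) else x 2 (n' + 4 + 3 * s))
        = (if s % 2 = 0 then x 2 1 * x 2 (n' + 7 + 3 * s) else x 2 (n' + 7 + 3 * s))
          + (if s % 2 = 0 then x 2 1 * x 2 (n' + 1 + 3 * s) else x 2 (n' + 1 + 3 * s)) := by
      intro s
      by_cases h : s % 2 = 0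
      · simp only [h, if_pos]
        linear_combination x 2 1 * kk s
      · simp only [h, if_neg, ite_false]
        linear_combination kk s
    simp only [tf]
    rw [Finset.sum_add_distrib]
    have peel : ∀ (f : ℕ → R) (k : ℕ),
        ∑ s ∈ Finset.range (k + 2), f s = (∑ s ∈ Finset.range k, f s) + f k + f (k + 1) := by
      intro f k
      rw [Finset.sum_range_succ, Finset.sum_range_succ]
    rw [show 2 * m + 6 = 2 * m + 4 + 2 from by ring]
    rw [peel (fun s => if s % 2 = 0 then x 2 1 * x 2 (n' + 1 + 3 * s) else x 2 (n' + 1 + 3 * s))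
        (2 * m + 4)]
    rw [show 2 * m + 4 = 2 * m + 2 + 2 from by ring]
    rw [peel (fun s => if s % 2 = 0 then x 2 1 * x 2 (n' + 7 + 3 * s) else x 2 (n' + 7 + 3 * s))
        (2 * m + 2)]
    have o1 : (2 * m + 2) % 2 = 0 := by omega
    have o2 : (2 * m + 2 + 1) % 2 = 1 := by omega
    have o3 : (2 * m + 2 + 2) % 2 = 0 := by omega
    have o4 : (2 * m + 2 + 2 + 1) % 2 = 1 := by omega
    simp only [o1, o2, o3, o4]
    norm_num
    have i1 : n' + 7 + 3 * (2 * m + 2) = n' + 6 * m + 13 := by ring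
    have i2 : n' + 7 + 3 * (2 * m + 2 + 1) = n' + 6 * m + 16 := by ring
    have i3 : n' + 1 + 3 * (2 * m + 2 + 2) = n' + 6 * m + 13 := by ring
    have i4 : n' + 1 + 3 * (2 * m + 2 + 2 + 1) = n' + 6 * m + 16 := by ring
    rw [i1, i2, i3, i4]
    ring

end

/-- rank-3 tube (Proposition 8.1(2)). For `m ≥ 0`, `n ≥ 3m+2`:
`X_{E_2[3m+2]}X_{E_1[n]} = X_{E_2[n+3m+2]} + X_{E_2}X_{E_2[n+3m-1]} + ⋯ + X_{E_2}X_{E_2[n-3m-1]}`. -/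
theorem rank_three_tube_formula_2 {R : Type*} [CommRing R]
    (x : ℤ → ℕ → R)
    (hper : ∀ (i : ℤ) (n : ℕ), x (i + 3) n = x i n)
    (hzero : ∀ i : ℤ, x i 0 = 1)
    (hrel1 : ∀ (i : ℤ) (k : ℕ), x i (k + 1) * x (i + (k + 1 : ℕ)) 1 = x i (k + 2) + x i k)
    (hrel2 : ∀ (i : ℤ) (k : ℕ), x i 1 * x (i + 1) (k + 1) = x i (k + 2) + x (i + 2) k)
    (m n : ℕ) (hn : 3 * m + 2 ≤ n) :
    x 2 (3 * m + 2) * x 1 n =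
      ∑ s ∈ Finset.range (2 * m + 2),
        if s % 2 = 0 then x 2 (n + 3 * m + 2 - 3 * s)
        else x 2 1 * x 2 (n + 3 * m + 2 - 3 * s) := by
  obtain ⟨n', rfl⟩ : ∃ n', n = n' + 3 * m + 2 := ⟨n - (3 * m + 2), by omega⟩
  rw [rtube_aux x hper hzero hrel1 hrel2 m n']
  rw [← Finset.sum_range_reflect]
  refine Finset.sum_congr rfl ?_
  intro s hs
  simp only [Finset.mem_range] at hs
  have hle : s ≤ 2 * m + 1 := by omega
  have harg : n' + 1 + 3 * (2 * m + 2 - 1 - s) = n' + 3 * m + 2 + 3 * m + 2 - 3 * s := by omega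
  rw [harg]
  by_cases h2 : s % 2 = 0
  · have hp : (2 * m + 1 - s) % 2 = 1 := by omega
    simp [h2, hp]
  · have h2' : s % 2 = 1 := by omega
    have hp : (2 * m + 1 - s) % 2 = 0 := by omega
    simp [h2', hp]
end

section
/- Take r = 3. For all integers m ≥ 0 and n ≥ 3m+3: x_{2,3m+3}·x_{1,n} = Σ_{s=0}^{3m+3} x_{1−s, n+3m+3−2s}, where the first index 1−s is an integer interpreted via the mod-3 periodicity (so the first indices cycle through 1, 3, 2, 1, 3, 2, …); that is, X_{E_2[3m+3]}X_{E_1[n]} = X_{E_1[n+3m+3]} + X_{E_3[n+3m+1]} + X_{E_2[n+3m−1]} + X_{E_1[n+3m−3]} + ⋯ + X_{E_3[n−3m+1]} + X_{E_2[n−3m−1]} + X_{E_1[n−3m−3]}. -/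
set_option maxHeartbeats 800000

section Aux
variable {R : Type*} [CommRing R]

lemma per_nat (x : ℤ → ℕ → R) (hper : ∀ (i : ℤ) (n : ℕ), x (i + 3) n = x i n) :
    ∀ (t : ℕ) (B : ℤ) (n : ℕ), x (B + 3 * t) n = x B n := by
  intro t
  induction t with
  | zero => simp
  | succ t ih =>
      intro B n
      have e : (B + 3 * ((t + 1 : ℕ) : ℤ)) = (B + 3) + 3 * (t : ℤ) := by push_cast; ring
      rw [e, ih, hper]

lemma xcongr3 (x : ℤ → ℕ → R) (hper : ∀ (i : ℤ) (n : ℕ), x (i + 3) n = x i n)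
    (A B : ℤ) (h : 3 ∣ A - B) (n : ℕ) : x A n = x B n := by
  obtain ⟨k, hk⟩ := h
  rcases le_or_gt 0 k with h' | h'
  · lift k to ℕ using h'
    have e : A = B + 3 * (k : ℤ) := by linarith
    rw [e, per_nat x hper]
  · have h'' : 0 ≤ -k := by omega
    lift (-k) to ℕ using h'' with t ht
    have e : B = A + 3 * (t : ℤ) := by
      have : (t : ℤ) = -k := ht
      linarith
    rw [e, per_nat x hper]

lemma split0 (x : ℤ → ℕ → R)
    (hzero : ∀ i : ℤ, x i 0 = 1)
    (hrel1 : ∀ (i : ℤ) (k : ℕ), x i (k + 1) * x (i + (k + 1 : ℕ)) 1 = x i (k + 2) + x i k)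
    (hrel2 : ∀ (i : ℤ) (k : ℕ), x i 1 * x (i + 1) (k + 1) = x i (k + 2) + x (i + 2) k) :
    ∀ (k n : ℕ) (i : ℤ),
      x i (k + 1) * x (i + (k : ℤ) + 1) (n + 1) = x i (n + k + 2) + x i k * x (i + (k : ℤ) + 2) n := by
  have R1 : ∀ (i : ℤ) (k : ℕ), x i (k + 1) * x (i + (k : ℤ) + 1) 1 = x i (k + 2) + x i k := by
    intro i k
    have e : i + (k : ℤ) + 1 = i + ((k + 1 : ℕ) : ℤ) := by push_cast; ring
    rw [e]; exact hrel1 i k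
  intro k
  induction k with
  | zero =>
      intro n i
      simpa [hzero] using hrel2 i n
  | succ k ih =>
      intro n i
      rw [show ((k + 1 : ℕ) : ℤ) = (k : ℤ) + 1 from by push_cast; ring]
      rw [show (i + ((k : ℤ) + 1) + 1) = i + (k : ℤ) + 2 from by ring,
          show (i + ((k : ℤ) + 1) + 2) = i + (k : ℤ) + 3 from by ring,
          show k + 1 + 1 = k + 2 from by omega,
          show n + (k + 1) + 2 = n + k + 3 from by omega]
      have hA := R1 i k
      have hB := hrel2 (i + (k : ℤ) + 1) n
      rw [show (i + (k : ℤ) + 1 + 1) = i + (k : ℤ) + 2 from by ring,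
          show (i + (k : ℤ) + 1 + 2) = i + (k : ℤ) + 3 from by ring] at hB
      have hC := ih (n + 1) i
      rw [show n + 1 + k + 2 = n + k + 3 from by omega] at hC
      linear_combination (-(x (i + (k : ℤ) + 2) (n + 1))) * hA + x i (k + 1) * hB + hC

lemma overlap0 (x : ℤ → ℕ → R)
    (hzero : ∀ i : ℤ, x i 0 = 1)
    (hrel1 : ∀ (i : ℤ) (k : ℕ), x i (k + 1) * x (i + (k + 1 : ℕ)) 1 = x i (k + 2) + x i k)
    (hrel2 : ∀ (i : ℤ) (k : ℕ), x i 1 * x (i + 1) (k + 1) = x i (k + 2) + x (i + 2) k) :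
    ∀ (k n : ℕ) (i : ℤ),
      x i (k + 2) * x (i + (k : ℤ) + 1) (n + 2)
        = x i (k + n + 3) * x (i + (k : ℤ) + 1) 1 + x i k * x (i + (k : ℤ) + 3) n := by
  intro k n i
  have hA : x i (k + 1) * x (i + (k : ℤ) + 1) 1 = x i (k + 2) + x i k := by
    have e : i + (k : ℤ) + 1 = i + ((k + 1 : ℕ) : ℤ) := by push_cast; ring
    rw [e]; exact hrel1 i k
  have hs := split0 x hzero hrel1 hrel2 k (n + 1) i
  rw [show n + 1 + k + 2 = k + n + 3 from by omega] at hs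
  have hB := hrel2 (i + (k : ℤ) + 1) n
  rw [show (i + (k : ℤ) + 1 + 1) = i + (k : ℤ) + 2 from by ring,
      show (i + (k : ℤ) + 1 + 2) = i + (k : ℤ) + 3 from by ring] at hB
  linear_combination (-(x (i + (k : ℤ) + 1) (n + 2))) * hA + (x (i + (k : ℤ) + 1) 1) * hs
    + x i k * hB

lemma split' (x : ℤ → ℕ → R)
    (hper : ∀ (i : ℤ) (n : ℕ), x (i + 3) n = x i n)
    (hzero : ∀ i : ℤ, x i 0 = 1)
    (hrel1 : ∀ (i : ℤ) (k : ℕ), x i (k + 1) * x (i + (k + 1 : ℕ)) 1 = x i (k + 2) + x i k)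
    (hrel2 : ∀ (i : ℤ) (k : ℕ), x i 1 * x (i + 1) (k + 1) = x i (k + 2) + x (i + 2) k)
    (k n : ℕ) (i j j' : ℤ) (hj : 3 ∣ i + (k : ℤ) + 1 - j) (hj' : 3 ∣ i + (k : ℤ) + 2 - j') :
    x i (k + 1) * x j (n + 1) = x i (n + k + 2) + x i k * x j' n := by
  rw [xcongr3 x hper j (i + (k : ℤ) + 1) (by omega), xcongr3 x hper j' (i + (k : ℤ) + 2) (by omega)]
  exact split0 x hzero hrel1 hrel2 k n i

lemma overlap' (x : ℤ → ℕ → R)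
    (hper : ∀ (i : ℤ) (n : ℕ), x (i + 3) n = x i n)
    (hzero : ∀ i : ℤ, x i 0 = 1)
    (hrel1 : ∀ (i : ℤ) (k : ℕ), x i (k + 1) * x (i + (k + 1 : ℕ)) 1 = x i (k + 2) + x i k)
    (hrel2 : ∀ (i : ℤ) (k : ℕ), x i 1 * x (i + 1) (k + 1) = x i (k + 2) + x (i + 2) k)
    (k n : ℕ) (i j j₁ j₂ : ℤ) (hj : 3 ∣ i + (k : ℤ) + 1 - j)
    (hj₁ : 3 ∣ i + (k : ℤ) + 1 - j₁) (hj₂ : 3 ∣ i + (k : ℤ) + 3 - j₂) :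
    x i (k + 2) * x j (n + 2) = x i (k + n + 3) * x j₁ 1 + x i k * x j₂ n := by
  rw [xcongr3 x hper j (i + (k : ℤ) + 1) (by omega), xcongr3 x hper j₁ (i + (k : ℤ) + 1) (by omega),
      xcongr3 x hper j₂ (i + (k : ℤ) + 3) (by omega)]
  exact overlap0 x hzero hrel1 hrel2 k n i

lemma rel2' (x : ℤ → ℕ → R)
    (hper : ∀ (i : ℤ) (n : ℕ), x (i + 3) n = x i n)
    (hrel2 : ∀ (i : ℤ) (k : ℕ), x i 1 * x (i + 1) (k + 1) = x i (k + 2) + x (i + 2) k)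
    (i j j' : ℤ) (k : ℕ) (hj : 3 ∣ i + 1 - j) (hj' : 3 ∣ i + 2 - j') :
    x i 1 * x j (k + 1) = x i (k + 2) + x j' k := by
  rw [xcongr3 x hper j (i + 1) (by omega), xcongr3 x hper j' (i + 2) (by omega)]
  exact hrel2 i k

end Aux

section Main
variable {R : Type*} [CommRing R]

lemma main' (x : ℤ → ℕ → R)
    (hper : ∀ (i : ℤ) (n : ℕ), x (i + 3) n = x i n)
    (hzero : ∀ i : ℤ, x i 0 = 1)
    (hrel1 : ∀ (i : ℤ) (k : ℕ), x i (k + 1) * x (i + (k + 1 : ℕ)) 1 = x i (k + 2) + x i k)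
    (hrel2 : ∀ (i : ℤ) (k : ℕ), x i 1 * x (i + 1) (k + 1) = x i (k + 2) + x (i + 2) k) :
    ∀ (m n : ℕ), 3 * m ≤ n →
      x 2 (3 * m) * x 1 n = ∑ s ∈ Finset.range (3 * m + 1), x (1 - (s : ℤ)) (n + 3 * m - 2 * s) := by
  intro m
  induction m with
  | zero =>
      intro n _
      simp [hzero]
  | succ m ih =>
      intro n hn
      obtain ⟨p, rfl⟩ : ∃ p, n = p + 3 := ⟨n - 3, by omega⟩
      have hp : 3 * m ≤ p := by omega
      -- chain
      have H1 : x 2 (3 * m + 3) * x 1 (p + 3)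
          = x 2 (p + 3 * m + 5) * x 1 1 + x 2 (3 * m + 1) * x 0 (p + 1) := by
        have h := overlap' x hper hzero hrel1 hrel2 (3 * m + 1) (p + 1) 2 1 1 0
          (by push_cast; omega) (by push_cast; omega) (by push_cast; omega)
        rw [show 3 * m + 1 + 2 = 3 * m + 3 from by omega,
            show p + 1 + 2 = p + 3 from by omega,
            show 3 * m + 1 + (p + 1) + 3 = p + 3 * m + 5 from by omega] at h
        exact h
      have H2 : x 1 1 * x 2 (p + 3 * m + 5) = x 1 (p + 3 * m + 6) + x 0 (p + 3 * m + 4) := by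
        have h := rel2' x hper hrel2 1 2 0 (p + 3 * m + 4) (by omega) (by omega)
        rw [show p + 3 * m + 4 + 1 = p + 3 * m + 5 from by omega,
            show p + 3 * m + 4 + 2 = p + 3 * m + 6 from by omega] at h
        exact h
      have H3 : x 2 (3 * m + 1) * x 0 (p + 1) = x 2 (p + 3 * m + 2) + x 2 (3 * m) * x 1 p := by
        have h := split' x hper hzero hrel1 hrel2 (3 * m) p 2 0 1
          (by push_cast; omega) (by push_cast; omega)
        rw [show p + 3 * m + 2 = p + 3 * m + 2 from rfl] at h
        exact h
      have H4 := ih p hp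
      -- sum manipulation
      have Hsum : ∑ s ∈ Finset.range (3 * (m + 1) + 1), x (1 - (s : ℤ)) (p + 3 + 3 * (m + 1) - 2 * s)
          = x 1 (p + 3 * m + 6) + x 0 (p + 3 * m + 4) + x 2 (p + 3 * m + 2)
            + ∑ s ∈ Finset.range (3 * m + 1), x (1 - (s : ℤ)) (p + 3 * m - 2 * s) := by
        have e : 3 * (m + 1) + 1 = 3 * m + 1 + 1 + 1 + 1 := by omega
        rw [e, Finset.sum_range_succ', Finset.sum_range_succ', Finset.sum_range_succ']
        have hterm : ∀ s ∈ Finset.range (3 * m + 1),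
            x (1 - ((s + 1 + 1 + 1 : ℕ) : ℤ)) (p + 3 + 3 * (m + 1) - 2 * (s + 1 + 1 + 1))
              = x (1 - (s : ℤ)) (p + 3 * m - 2 * s) := by
          intro s hs
          have hs' : s ≤ 3 * m := by
            have := Finset.mem_range.mp hs; omega
          rw [show p + 3 + 3 * (m + 1) - 2 * (s + 1 + 1 + 1) = p + 3 * m - 2 * s from by omega]
          exact xcongr3 x hper _ _ (by push_cast; omega) _
        rw [Finset.sum_congr rfl hterm]
        rw [show p + 3 + 3 * (m + 1) - 2 * (0 + 1 + 1) = p + 3 * m + 2 from by omega,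
            show p + 3 + 3 * (m + 1) - 2 * (0 + 1) = p + 3 * m + 4 from by omega,
            show p + 3 + 3 * (m + 1) - 2 * 0 = p + 3 * m + 6 from by omega]
        rw [show (1 - ((0 + 1 + 1 : ℕ) : ℤ)) = -1 from by norm_num,
            show (1 - ((0 + 1 : ℕ) : ℤ)) = 0 from by norm_num,
            show (1 - ((0 : ℕ) : ℤ)) = 1 from by norm_num]
        rw [xcongr3 x hper (-1) 2 (by omega)]
        ring
      rw [show 3 * (m + 1) = 3 * m + 3 from by omega] at Hsum ⊢
      rw [Hsum]
      linear_combination H1 + H2 + H3 + H4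
end Main



/-- rank-3 tube (Proposition 8.1(3)). For `m ≥ 0`, `n ≥ 3m+3`:
`X_{E_2[3m+3]}X_{E_1[n]} = X_{E_1[n+3m+3]} + X_{E_3[n+3m+1]} + X_{E_2[n+3m-1]} + ⋯ + X_{E_1[n-3m-3]}`,
the first indices cycling through `1, 3, 2, 1, 3, 2, …` via mod-3 periodicity. -/
theorem rank_three_tube_formula_3 {R : Type*} [CommRing R]
    (x : ℤ → ℕ → R)
    (hper : ∀ (i : ℤ) (n : ℕ), x (i + 3) n = x i n)
    (hzero : ∀ i : ℤ, x i 0 = 1)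
    (hrel1 : ∀ (i : ℤ) (k : ℕ), x i (k + 1) * x (i + (k + 1 : ℕ)) 1 = x i (k + 2) + x i k)
    (hrel2 : ∀ (i : ℤ) (k : ℕ), x i 1 * x (i + 1) (k + 1) = x i (k + 2) + x (i + 2) k)
    (m n : ℕ) (hn : 3 * m + 3 ≤ n) :
    x 2 (3 * m + 3) * x 1 n =
      ∑ s ∈ Finset.range (3 * m + 4), x (1 - (s : ℤ)) (n + 3 * m + 3 - 2 * s) := by
  have h := main' x hper hzero hrel1 hrel2 (m + 1) n (by omega)
  rw [show 3 * (m + 1) = 3 * m + 3 from by omega] at h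
  rw [h, show 3 * m + 3 + 1 = 3 * m + 4 from by omega]
  exact Finset.sum_congr rfl (fun s _ => by
    rw [show n + (3 * m + 3) - 2 * s = n + 3 * m + 3 - 2 * s from by omega])
end

section
/- Take r = 3. For all integers m ≥ 0 and n ≥ 3m+1 with n ≡ 1 (mod 3): x_{2,3m+1}·x_{1,n} = Σ_{s=0}^{3m+1} x_{1,n+3m+1−2s}; that is, X_{E_2[3m+1]}X_{E_1[n]} = X_{E_1[n+3m+1]} + X_{E_1[n+3m−1]} + X_{E_1[n+3m−3]} + ⋯ + X_{E_1[n−3m+1]} + X_{E_1[n−3m−1]}. -/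
/-!
Along a ray `k ↦ x i k`, relation (iii) is a three-term recurrence with `3`-periodic
coefficients `x j 1`. Composing three of its steps gives
`T · x i (c + 3) = x i (c + 6) + x i c` with `T = pqr - p - q - r` for the quasi-simples
`p, q, r`, and likewise `x j 4 = T · x j 1 + 1`. So the left factors `u m = x (i + 1) (3m + 1)`
satisfy `u (m + 2) = T · u (m + 1) - u m`, and the formula follows by induction on `m`:
multiplying the sum for `m + 1` by `T` replaces each term `x i (c + 3)` by
`x i (c + 6) + x i c`, which widens the summation window, and subtracting the sum for `m`
trims it to the window for `m + 2`.
-/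

open Finset

theorem Finset.sum_range_add_shift_three {M : Type*} [AddCommMonoid M] (f : ℕ → M) (L : ℕ) :
    ∑ s ∈ range (L + 3), (f (s + 3) + f s) =
      ∑ s ∈ range L, f (s + 3) + ∑ s ∈ range (L + 6), f s := by
  induction L with
  | zero => simp only [sum_range_succ, sum_range_zero]; abel
  | succ L ih =>
    rw [show L + 1 + 3 = L + 3 + 1 by rfl, sum_range_succ, ih, show L + 1 + 6 = L + 6 + 1 by rfl,
      sum_range_succ f (L + 6), sum_range_succ (fun s => f (s + 3)) L]
    abel

namespace RankThreeTube

variable {R : Type*} {x : ℤ → ℕ → R}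

theorem x_eq_of_modEq (hper : ∀ (i : ℤ) (n : ℕ), x (i + 3) n = x i n) {i j : ℤ}
    (h : i ≡ j [ZMOD 3]) (n : ℕ) : x i n = x j n := by
  have hp : Function.Periodic (fun i => x i n) 3 := fun i => hper i n
  obtain ⟨k, hk⟩ := h.symm.dvd
  rw [show j = i - k * 3 by linarith]
  exact (hp.sub_int_mul_eq k).symm

variable [CommRing R]

def transfer (x : ℤ → ℕ → R) (k : ℤ) : R :=
  x k 1 * x (k + 1) 1 * x (k + 2) 1 - x k 1 - x (k + 1) 1 - x (k + 2) 1

theorem transfer_eq (hper : ∀ (i : ℤ) (n : ℕ), x (i + 3) n = x i n) (k l : ℤ) :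
    transfer x k = transfer x l := by
  have hp : Function.Periodic (transfer x) 1 := fun j => by
    simp only [transfer, add_assoc, one_add_one_eq_two, show (1 : ℤ) + 2 = 3 by norm_num, hper]
    ring
  have h (k : ℤ) : transfer x k = transfer x 0 := by
    simpa using hp.int_mul_eq k
  rw [h k, h l]

theorem mul_x_succ_of_modEq (hper : ∀ (i : ℤ) (n : ℕ), x (i + 3) n = x i n)
    (hrel1 : ∀ (i : ℤ) (k : ℕ), x i (k + 1) * x (i + (k + 1 : ℕ)) 1 = x i (k + 2) + x i k)
    {i j : ℤ} {c : ℕ} (h : j ≡ i + c + 1 [ZMOD 3]) :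
    x j 1 * x i (c + 1) = x i (c + 2) + x i c := by
  rw [x_eq_of_modEq hper h, mul_comm, ← hrel1, Nat.cast_succ, add_assoc]

theorem transfer_mul (hper : ∀ (i : ℤ) (n : ℕ), x (i + 3) n = x i n)
    (hrel1 : ∀ (i : ℤ) (k : ℕ), x i (k + 1) * x (i + (k + 1 : ℕ)) 1 = x i (k + 2) + x i k)
    (k i : ℤ) (c : ℕ) :
    transfer x k * x i (c + 3) = x i (c + 6) + x i c := by
  set p := x (i + c + 1) 1
  set q := x (i + c + 2) 1
  set r := x (i + c + 3) 1
  have h0 : p * x i (c + 1) = x i (c + 2) + x i c :=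
    mul_x_succ_of_modEq hper hrel1 (.refl _)
  have h1 : q * x i (c + 2) = x i (c + 3) + x i (c + 1) :=
    mul_x_succ_of_modEq hper hrel1 (by unfold Int.ModEq; omega)
  have h2 : r * x i (c + 3) = x i (c + 4) + x i (c + 2) :=
    mul_x_succ_of_modEq hper hrel1 (by unfold Int.ModEq; omega)
  have h3 : p * x i (c + 4) = x i (c + 5) + x i (c + 3) :=
    mul_x_succ_of_modEq hper hrel1 (by unfold Int.ModEq; omega)
  have h4 : q * x i (c + 5) = x i (c + 6) + x i (c + 4) :=
    mul_x_succ_of_modEq hper hrel1 (by unfold Int.ModEq; omega)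
  have hT : transfer x k = p * q * r - p - q - r := by
    rw [transfer_eq hper k (i + c + 1)]
    simp only [transfer, p, q, r, add_assoc]
    norm_num
  rw [hT]
  linear_combination h4 + q * h3 + (p * q - 1) * h2 + p * h1 + h0

theorem x_four_eq (hper : ∀ (i : ℤ) (n : ℕ), x (i + 3) n = x i n)
    (hzero : ∀ i : ℤ, x i 0 = 1)
    (hrel1 : ∀ (i : ℤ) (k : ℕ), x i (k + 1) * x (i + (k + 1 : ℕ)) 1 = x i (k + 2) + x i k)
    (k j : ℤ) : x j 4 = transfer x k * x j 1 + 1 := by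
  set p := x j 1
  set q := x (j + 1) 1
  set r := x (j + 2) 1
  have h0 : q * p = x j 2 + 1 := by
    rw [← hzero j]
    exact mul_x_succ_of_modEq hper hrel1 (by unfold Int.ModEq; omega)
  have h1 : r * x j 2 = x j 3 + p :=
    mul_x_succ_of_modEq hper hrel1 (by unfold Int.ModEq; omega)
  have h2 : p * x j 3 = x j 4 + x j 2 :=
    mul_x_succ_of_modEq hper hrel1 (by unfold Int.ModEq; omega)
  rw [transfer_eq hper k j, transfer]
  linear_combination -(p * r - 1) * h0 - p * h1 - h2

theorem x_succ_mul_x_eq_sum (hper : ∀ (i : ℤ) (n : ℕ), x (i + 3) n = x i n)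
    (hzero : ∀ i : ℤ, x i 0 = 1)
    (hrel1 : ∀ (i : ℤ) (k : ℕ), x i (k + 1) * x (i + (k + 1 : ℕ)) 1 = x i (k + 2) + x i k)
    (i : ℤ) (m b : ℕ) (hb : 3 ∣ b) :
    x (i + 1) (3 * m + 1) * x i (b + (3 * m + 1)) =
      ∑ s ∈ range (3 * m + 2), x i (b + 2 * s) := by
  induction m using Nat.twoStepInduction generalizing b with
  | zero =>
    have h : x (i + 1) 1 * x i (b + 1) = x i (b + 2) + x i b :=
      mul_x_succ_of_modEq hper hrel1 (by unfold Int.ModEq; omega)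
    simp only [sum_range_succ, sum_range_zero]
    linear_combination (norm := ring_nf) h
  | one =>
    have h4 := x_four_eq hper hzero hrel1 0 (i + 1)
    have h1 : x (i + 1) 1 * x i (b + 4) = x i (b + 5) + x i (b + 3) :=
      mul_x_succ_of_modEq hper hrel1 (by unfold Int.ModEq; omega)
    have t5 := transfer_mul hper hrel1 0 i (b + 2)
    have t3 := transfer_mul hper hrel1 0 i b
    simp only [sum_range_succ, sum_range_zero]
    linear_combination (norm := ring_nf) x i (b + 4) * h4 + transfer x 0 * h1 + t5 + t3
  | more m ih ih1 =>
    set T := transfer x 0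
    set f := fun s => x i (b + 2 * s)
    have hu : x (i + 1) (3 * m + 7) = T * x (i + 1) (3 * m + 4) - x (i + 1) (3 * m + 1) := by
      rw [transfer_mul hper hrel1 0 (i + 1) (3 * m + 1)]
      ring
    have h1 : x (i + 1) (3 * m + 4) * x i (b + (3 * m + 7)) =
        ∑ s ∈ range (3 * m + 5), x i (b + 3 + 2 * s) := by
      have h := ih1 (b + 3) (by omega)
      rwa [show 3 * (m + 1) + 1 = 3 * m + 4 by ring, show 3 * (m + 1) + 2 = 3 * m + 5 by ring,
        show b + 3 + (3 * m + 4) = b + (3 * m + 7) by ring] at h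
    have h2 : x (i + 1) (3 * m + 1) * x i (b + (3 * m + 7)) =
        ∑ s ∈ range (3 * m + 2), f (s + 3) := by
      rw [show b + (3 * m + 7) = b + 6 + (3 * m + 1) by ring, ih (b + 6) (by omega)]
      exact sum_congr rfl fun s _ => congrArg (x i) (by ring)
    have h3 : T * ∑ s ∈ range (3 * m + 5), x i (b + 3 + 2 * s) =
        ∑ s ∈ range (3 * m + 5), (f (s + 3) + f s) := by
      rw [mul_sum]
      refine sum_congr rfl fun s _ => ?_
      have h := transfer_mul hper hrel1 0 i (b + 2 * s)
      rwa [show b + 2 * s + 3 = b + 3 + 2 * s by ring,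
        show b + 2 * s + 6 = b + 2 * (s + 3) by ring] at h
    have hs := sum_range_add_shift_three f (3 * m + 2)
    rw [show 3 * m + 2 + 3 = 3 * m + 5 by ring] at hs
    rw [show 3 * (m + 2) + 1 = 3 * m + 7 by ring, show 3 * (m + 2) + 2 = 3 * m + 2 + 6 by ring, hu]
    linear_combination T * h1 - h2 + h3 + hs

end RankThreeTube

theorem rank_three_tube_formula_4_general {R : Type*} [CommRing R]
    (x : ℤ → ℕ → R)
    (hper : ∀ (i : ℤ) (n : ℕ), x (i + 3) n = x i n)
    (hzero : ∀ i : ℤ, x i 0 = 1)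
    (hrel1 : ∀ (i : ℤ) (k : ℕ), x i (k + 1) * x (i + (k + 1 : ℕ)) 1 = x i (k + 2) + x i k)
    (m n : ℕ) (hn : 3 * m + 1 ≤ n) (hmod : n % 3 = 1) :
    x 2 (3 * m + 1) * x 1 n =
      ∑ s ∈ Finset.range (3 * m + 2), x 1 (n + 3 * m + 1 - 2 * s) := by
  obtain ⟨b, rfl⟩ : ∃ b, n = b + (3 * m + 1) := ⟨n - (3 * m + 1), by omega⟩
  rw [show (2 : ℤ) = 1 + 1 by norm_num,
    RankThreeTube.x_succ_mul_x_eq_sum hper hzero hrel1 1 m b (by omega), ← sum_range_reflect]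
  refine sum_congr rfl fun s hs => congrArg (x 1) ?_
  have := mem_range.mp hs
  omega

/-- rank-3 tube (Corollary 8.2(1)). For `m ≥ 0`, `n ≥ 3m+1`, `n ≡ 1 (mod 3)`:
`X_{E_2[3m+1]}X_{E_1[n]} = X_{E_1[n+3m+1]} + X_{E_1[n+3m-1]} + ⋯ + X_{E_1[n-3m-1]}`. -/
theorem rank_three_tube_formula_4 {R : Type*} [CommRing R]
    (x : ℤ → ℕ → R)
    (hper : ∀ (i : ℤ) (n : ℕ), x (i + 3) n = x i n)
    (hzero : ∀ i : ℤ, x i 0 = 1)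
    (hrel1 : ∀ (i : ℤ) (k : ℕ), x i (k + 1) * x (i + (k + 1 : ℕ)) 1 = x i (k + 2) + x i k)
    (hrel2 : ∀ (i : ℤ) (k : ℕ), x i 1 * x (i + 1) (k + 1) = x i (k + 2) + x (i + 2) k)
    (m n : ℕ) (hn : 3 * m + 1 ≤ n) (hmod : n % 3 = 1) :
    x 2 (3 * m + 1) * x 1 n =
      ∑ s ∈ Finset.range (3 * m + 2), x 1 (n + 3 * m + 1 - 2 * s) :=
  rank_three_tube_formula_4_general x hper hzero hrel1 m n hn hmod
end

section
/- Take r = 3. For all integers m ≥ 0 and n ≥ 3m+2 with n ≡ 1 (mod 3): x_{2,3m+2}·x_{1,n} = Σ_{s=0}^{3m+2} x_{2,n+3m+2−2s}; that is, X_{E_2[3m+2]}X_{E_1[n]} = X_{E_2[n+3m+2]} + X_{E_2[n+3m]} + X_{E_2[n+3m−2]} + ⋯ + X_{E_2[n−3m]} + X_{E_2[n−3m−2]}. -/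
/-- rank-3 tube (Corollary 8.2(2)). For `m ≥ 0`, `n ≥ 3m+2`, `n ≡ 1 (mod 3)`:
`X_{E_2[3m+2]}X_{E_1[n]} = X_{E_2[n+3m+2]} + X_{E_2[n+3m]} + ⋯ + X_{E_2[n-3m-2]}`. -/
theorem rank_three_tube_formula_5 {R : Type*} [CommRing R]
    (x : ℤ → ℕ → R)
    (hper : ∀ (i : ℤ) (n : ℕ), x (i + 3) n = x i n)
    (hzero : ∀ i : ℤ, x i 0 = 1)
    (hrel1 : ∀ (i : ℤ) (k : ℕ), x i (k + 1) * x (i + (k + 1 : ℕ)) 1 = x i (k + 2) + x i k)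
    (hrel2 : ∀ (i : ℤ) (k : ℕ), x i 1 * x (i + 1) (k + 1) = x i (k + 2) + x (i + 2) k)
    (m n : ℕ) (hn : 3 * m + 2 ≤ n) (hmod : n % 3 = 1) :
    x 2 (3 * m + 2) * x 1 n =
      ∑ s ∈ Finset.range (3 * m + 3), x 2 (n + 3 * m + 2 - 2 * s) := by
  -- periodicity for multiples of 3
  have hp : ∀ (t : ℕ) (j : ℤ) (k : ℕ), x (j + 3*(t:ℤ)) k = x j k := by
    intro t
    induction t with
    | zero => intro j k; norm_num
    | succ t ih =>
      intro j k
      rw [show j + 3*((t+1:ℕ):ℤ) = (j + 3*(t:ℤ)) + 3 by push_cast; ring, hper, ih]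
  -- reduce first index mod 3
  have cmod : ∀ k : ℕ, x (k:ℤ) 1 = x ((k % 3 : ℕ):ℤ) 1 := by
    intro k
    have e : k = k % 3 + 3 * (k / 3) := by omega
    calc x (k:ℤ) 1 = x ((k % 3 + 3*(k/3) : ℕ) : ℤ) 1 := by rw [← e]
      _ = x (((k%3:ℕ):ℤ) + 3*((k/3:ℕ):ℤ)) 1 := by
          rw [show ((k % 3 + 3*(k/3) : ℕ) : ℤ) = ((k%3:ℕ):ℤ) + 3*((k/3:ℕ):ℤ) by push_cast; ring]
      _ = x ((k%3 : ℕ):ℤ) 1 := hp (k/3) _ 1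
  -- normalized recursion for the x 2 row
  have R1 : ∀ k : ℕ, x 2 (k+1) * x (((3+k : ℕ)):ℤ) 1 = x 2 (k+2) + x 2 k := by
    intro k
    have h := hrel1 2 k
    rw [show ((2:ℤ) + ((k+1:ℕ):ℤ)) = ((3+k:ℕ):ℤ) by push_cast; ring] at h
    exact h
  -- explicit small relations
  have e1 : x 2 1 * x 0 1 = x 2 2 + x 2 0 := by
    have h := R1 0; rw [cmod (3+0)] at h; norm_num at h; exact h
  have e2 : x 2 2 * x 1 1 = x 2 3 + x 2 1 := by
    have h := R1 1; rw [cmod (3+1)] at h; norm_num at h; exact h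
  have e3 : x 2 3 * x 2 1 = x 2 4 + x 2 2 := by
    have h := R1 2; rw [cmod (3+2)] at h; norm_num at h; exact h
  have e4 : x 2 4 * x 0 1 = x 2 5 + x 2 3 := by
    have h := R1 3; rw [cmod (3+3)] at h; norm_num at h; exact h
  have e5 : x 2 5 * x 1 1 = x 2 6 + x 2 4 := by
    have h := R1 4; rw [cmod (3+4)] at h; norm_num at h; exact h
  have e6 : x 2 6 * x 2 1 = x 2 7 + x 2 5 := by
    have h := R1 5; rw [cmod (3+5)] at h; norm_num at h; exact h
  have h0 : x 2 0 = 1 := hzero 2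
  have f2 : x 2 2 = x 2 1 * x 0 1 - x 2 0 := by linear_combination -e1
  have f3 : x 2 3 = x 2 2 * x 1 1 - x 2 1 := by linear_combination -e2
  have f4 : x 2 4 = x 2 3 * x 2 1 - x 2 2 := by linear_combination -e3
  have f5 : x 2 5 = x 2 4 * x 0 1 - x 2 3 := by linear_combination -e4
  have f6 : x 2 6 = x 2 5 * x 1 1 - x 2 4 := by linear_combination -e5
  have f7 : x 2 7 = x 2 6 * x 2 1 - x 2 5 := by linear_combination -e6
  set z : R := x 2 1 * x 0 1 * x 1 1 - x 0 1 - x 1 1 - x 2 1 with hzdef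
  have base0 : z * x 2 3 = x 2 6 + x 2 0 := by
    rw [hzdef, f6, f5, f4, f3, f2, h0]; ring
  have base1 : z * x 2 4 = x 2 7 + x 2 1 := by
    rw [hzdef, f7, f6, f5, f4, f3, f2, h0]; ring
  -- three-step Chebyshev-type recursion
  have H : ∀ L : ℕ, (z * x 2 (L+3) = x 2 (L+6) + x 2 L)
      ∧ (z * x 2 (L+4) = x 2 (L+7) + x 2 (L+1)) := by
    intro L
    induction L with
    | zero => exact ⟨base0, base1⟩
    | succ L ih =>
      obtain ⟨ih1, ih2⟩ := ih
      refine ⟨?_, ?_⟩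
      · rw [show L+1+3 = L+4 by omega, show L+1+6 = L+7 by omega]; exact ih2
      · rw [show L+1+4 = L+5 by omega, show L+1+7 = L+8 by omega, show L+1+1 = L+2 by omega]
        have hA := R1 (L+3)
        have hB := R1 (L+6)
        have hC := R1 L
        rw [cmod (3+(L+3)), show (3+(L+3))%3 = (3+L)%3 by omega,
            show L+3+1 = L+4 by omega, show L+3+2 = L+5 by omega] at hA
        rw [cmod (3+(L+6)), show (3+(L+6))%3 = (3+L)%3 by omega,
            show L+6+1 = L+7 by omega, show L+6+2 = L+8 by omega] at hB
        rw [cmod (3+L)] at hC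
        linear_combination (-z) * hA + x ((((3+L) % 3 : ℕ)):ℤ) 1 * ih2 - ih1 + hB + hC
  have key : ∀ L : ℕ, z * x 2 (L+3) = x 2 (L+6) + x 2 L := fun L => (H L).1
  -- base case of the main induction (quasi-length 2)
  have p0 : ∀ t : ℕ, x 2 2 * x 1 (3*t+4) = x 2 (3*t+6) + x 2 (3*t+4) + x 2 (3*t+2) := by
    intro t
    have g1 : x 0 1 * x 1 (3*t+4) = x 0 (3*t+5) + x 2 (3*t+3) := by
      have h := hrel2 0 (3*t+3)
      norm_num [show 3*t+3+1 = 3*t+4 by omega, show 3*t+3+2 = 3*t+5 by omega] at h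
      exact h
    have g2 : x 2 1 * x 0 (3*t+5) = x 2 (3*t+6) + x 1 (3*t+4) := by
      have h := hrel2 2 (3*t+4)
      rw [show (2+1:ℤ) = 0+3 by norm_num, hper, show (2+2:ℤ) = 1+3 by norm_num, hper,
          show 3*t+4+1 = 3*t+5 by omega, show 3*t+4+2 = 3*t+6 by omega] at h
      exact h
    have g3 : x 2 (3*t+3) * x 2 1 = x 2 (3*t+4) + x 2 (3*t+2) := by
      have h := R1 (3*t+2)
      rw [cmod (3+(3*t+2)), show (3+(3*t+2))%3 = 2 by omega] at h
      push_cast at h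
      rw [show 3*t+2+1 = 3*t+3 by omega, show 3*t+2+2 = 3*t+4 by omega] at h
      exact h
    linear_combination x 1 (3*t+4) * f2 + x 2 1 * g1 + g2 + g3 - x 1 (3*t+4) * h0
  have q5 : x 2 5 = z * x 2 2 := by
    rw [hzdef, f5, f4, f3, f2, h0]; ring
  -- quasi-length 5 case
  have p1 : ∀ t : ℕ, x 2 5 * x 1 (3*t+7) = x 2 (3*t+12) + x 2 (3*t+10) + x 2 (3*t+8)
      + x 2 (3*t+6) + x 2 (3*t+4) + x 2 (3*t+2) := by
    intro t
    have hp0 := p0 (t+1)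
    rw [show 3*(t+1)+4 = 3*t+7 by ring, show 3*(t+1)+6 = 3*t+9 by ring,
        show 3*(t+1)+2 = 3*t+5 by ring] at hp0
    have k1 := key (3*t+6)
    have k2 := key (3*t+4)
    have k3 := key (3*t+2)
    rw [show 3*t+6+3 = 3*t+9 by omega, show 3*t+6+6 = 3*t+12 by omega] at k1
    rw [show 3*t+4+3 = 3*t+7 by omega, show 3*t+4+6 = 3*t+10 by omega] at k2
    rw [show 3*t+2+3 = 3*t+5 by omega, show 3*t+2+6 = 3*t+8 by omega] at k3
    linear_combination x 1 (3*t+7) * q5 + z * hp0 + k1 + k2 + k3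
  -- sum splitting helper
  have split3 : ∀ (f : ℕ → R) (K : ℕ), ∑ s ∈ Finset.range (K+3), f s
      = (∑ s ∈ Finset.range K, f s) + f K + f (K+1) + f (K+2) := by
    intro f K
    rw [show K+3 = K+2+1 by omega, Finset.sum_range_succ,
        show Finset.range (K+2) = Finset.range (K+1+1) from congrArg _ (by omega),
        Finset.sum_range_succ, Finset.sum_range_succ]
  -- the main two-step induction
  have main : ∀ M : ℕ,
      (∀ j : ℕ, x 2 (3*M+2) * x 1 (3*M+3*j+4) = ∑ s ∈ Finset.range (3*M+3), x 2 (3*j+2+2*s))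
      ∧ (∀ j : ℕ, x 2 (3*M+5) * x 1 (3*M+3*j+7) = ∑ s ∈ Finset.range (3*M+6), x 2 (3*j+2+2*s)) := by
    intro M
    induction M with
    | zero =>
      constructor
      · intro j
        norm_num
        rw [show Finset.range 3 = Finset.range (0+3) from congrArg _ (by norm_num),
            split3, Finset.sum_range_zero]
        rw [show 3*j+2+2*0 = 3*j+2 by omega, show 3*j+2+2*(0+1) = 3*j+4 by omega,
            show 3*j+2+2*(0+2) = 3*j+6 by omega]
        linear_combination p0 j
      · intro j
        norm_num
        rw [show Finset.range 6 = Finset.range (3+3) from congrArg _ (by norm_num), split3]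
        rw [show Finset.range 3 = Finset.range (0+3) from congrArg _ (by norm_num),
            split3, Finset.sum_range_zero]
        rw [show 3*j+2+2*0 = 3*j+2 by omega, show 3*j+2+2*(0+1) = 3*j+4 by omega,
            show 3*j+2+2*(0+2) = 3*j+6 by omega, show 3*j+2+2*3 = 3*j+8 by omega,
            show 3*j+2+2*(3+1) = 3*j+10 by omega, show 3*j+2+2*(3+2) = 3*j+12 by omega]
        linear_combination p1 j
    | succ M ih =>
      obtain ⟨ihA, ihB⟩ := ih
      constructor
      · intro j
        rw [show 3*(M+1)+2 = 3*M+5 by ring, show 3*(M+1)+3*j+4 = 3*M+3*j+7 by ring,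
            show 3*(M+1)+3 = 3*M+6 by ring]
        exact ihB j
      · intro j
        rw [show 3*(M+1)+5 = 3*M+8 by ring, show 3*(M+1)+3*j+7 = 3*M+3*j+10 by ring,
            show 3*(M+1)+6 = 3*M+9 by ring]
        have kk := key (3*M+2)
        rw [show 3*M+2+3 = 3*M+5 by omega, show 3*M+2+6 = 3*M+8 by omega] at kk
        have h1 := ihB (j+1)
        rw [show 3*M+3*(j+1)+7 = 3*M+3*j+10 by ring] at h1
        simp only [show 3*(j+1)+2 = 3*j+5 by omega] at h1
        have h2 := ihA (j+2)
        rw [show 3*M+3*(j+2)+4 = 3*M+3*j+10 by ring] at h2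
        simp only [show 3*(j+2)+2 = 3*j+8 by omega] at h2
        have hzsum : z * ∑ s ∈ Finset.range (3*M+6), x 2 (3*j+5+2*s)
            = (∑ s ∈ Finset.range (3*M+6), x 2 (3*j+8+2*s))
              + ∑ s ∈ Finset.range (3*M+6), x 2 (3*j+2+2*s) := by
          rw [Finset.mul_sum, ← Finset.sum_add_distrib]
          refine Finset.sum_congr rfl fun s _ => ?_
          have hk := key (3*j+2+2*s)
          rw [show 3*j+2+2*s+3 = 3*j+5+2*s by omega, show 3*j+2+2*s+6 = 3*j+8+2*s by omega] at hk
          exact hk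
        have split1 : ∑ s ∈ Finset.range (3*M+9), x 2 (3*j+2+2*s)
            = (∑ s ∈ Finset.range (3*M+6), x 2 (3*j+2+2*s))
              + x 2 (6*M+3*j+14) + x 2 (6*M+3*j+16) + x 2 (6*M+3*j+18) := by
          rw [show 3*M+9 = 3*M+6+3 by omega, split3]
          rw [show 3*j+2+2*(3*M+6) = 6*M+3*j+14 by ring, show 3*j+2+2*(3*M+6+1) = 6*M+3*j+16 by ring,
              show 3*j+2+2*(3*M+6+2) = 6*M+3*j+18 by ring]
        have split2 : ∑ s ∈ Finset.range (3*M+6), x 2 (3*j+8+2*s)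
            = (∑ s ∈ Finset.range (3*M+3), x 2 (3*j+8+2*s))
              + x 2 (6*M+3*j+14) + x 2 (6*M+3*j+16) + x 2 (6*M+3*j+18) := by
          rw [show 3*M+6 = 3*M+3+3 by omega, split3]
          rw [show 3*j+8+2*(3*M+3) = 6*M+3*j+14 by ring, show 3*j+8+2*(3*M+3+1) = 6*M+3*j+16 by ring,
              show 3*j+8+2*(3*M+3+2) = 6*M+3*j+18 by ring]
        linear_combination (-(x 1 (3*M+3*j+10))) * kk + z * h1 + hzsum - h2 - split1 + split2
  -- conclude
  obtain ⟨j, rfl⟩ : ∃ j, n = 3*m+3*j+4 := ⟨(n - (3*m+4))/3, by omega⟩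
  have hm := (main m).1 j
  rw [hm, ← Finset.sum_range_reflect]
  refine Finset.sum_congr rfl fun s hs => ?_
  have hs' := Finset.mem_range.mp hs
  congr 1
  omega
end

section
/- Take r = 3. For all integers m ≥ 0 and n ≥ 3m+1: x_{1,3m+1}·x_{1,n} = Σ_{s=0}^{2m} t_s, where t_s = x_{1,1}·x_{1,n+3m−3s} if s is even and t_s = x_{1,n+3m−3s} if s is odd; that is, X_{E_1[3m+1]}X_{E_1[n]} = X_{E_1}X_{E_1[n+3m]} + X_{E_1[n+3m−3]} + X_{E_1}X_{E_1[n+3m−6]} + ⋯ + X_{E_1[n−3m+3]} + X_{E_1}X_{E_1[n−3m]}. -/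
/-- rank-3 tube (Proposition 8.3(1)). For `m ≥ 0`, `n ≥ 3m+1`:
`X_{E_1[3m+1]}X_{E_1[n]} = X_{E_1}X_{E_1[n+3m]} + X_{E_1[n+3m-3]} + ⋯ + X_{E_1}X_{E_1[n-3m]}`. -/
theorem rank_three_tube_formula_6 {R : Type*} [CommRing R]
    (x : ℤ → ℕ → R)
    (hper : ∀ (i : ℤ) (n : ℕ), x (i + 3) n = x i n)
    (hzero : ∀ i : ℤ, x i 0 = 1)
    (hrel1 : ∀ (i : ℤ) (k : ℕ), x i (k + 1) * x (i + (k + 1 : ℕ)) 1 = x i (k + 2) + x i k)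
    (hrel2 : ∀ (i : ℤ) (k : ℕ), x i 1 * x (i + 1) (k + 1) = x i (k + 2) + x (i + 2) k)
    (m n : ℕ) (hn : 3 * m + 1 ≤ n) :
    x 1 (3 * m + 1) * x 1 n =
      ∑ s ∈ Finset.range (2 * m + 1),
        if s % 2 = 0 then x 1 1 * x 1 (n + 3 * m - 3 * s)
        else x 1 (n + 3 * m - 3 * s) := by
  -- normalized hrel1
  have h1 : ∀ (i : ℤ) (k : ℕ), x i (k + 1) * x (i + (k:ℤ) + 1) 1 = x i (k + 2) + x i k := by
    intro i k
    have h := hrel1 i k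
    have e : (i + ((k + 1 : ℕ) : ℤ)) = i + (k:ℤ) + 1 := by push_cast; ring
    rwa [e] at h
  -- generalized multiplication lemma
  have G : ∀ (l : ℕ) (i : ℤ) (k : ℕ),
      x i (k + 1) * x (i + (k:ℤ) + 1) (l + 1)
        = x i (k + (l + 2)) + x i k * x (i + (k:ℤ) + 2) l := by
    have key : ∀ l : ℕ,
        (∀ (i : ℤ) (k : ℕ), x i (k + 1) * x (i + (k:ℤ) + 1) (l + 1)
          = x i (k + (l + 2)) + x i k * x (i + (k:ℤ) + 2) l) ∧
        (∀ (i : ℤ) (k : ℕ), x i (k + 1) * x (i + (k:ℤ) + 1) (l + 1 + 1)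
          = x i (k + (l + 1 + 2)) + x i k * x (i + (k:ℤ) + 2) (l + 1)) := by
      intro l
      induction l with
      | zero =>
        constructor
        · intro i k
          have hz := hzero (i + (k:ℤ) + 2)
          linear_combination (norm := (push_cast; ring_nf)) h1 i k - x i k * hz
        · intro i k
          have hA := h1 (i + (k:ℤ) + 1) 0
          have hB := h1 i k
          have hC := h1 i (k + 1)
          have hz := hzero (i + (k:ℤ) + 1)
          linear_combination (norm := (push_cast; ring_nf))
            (-(x i (k + 1))) * hA + x (i + (k:ℤ) + 2) 1 * hB + hC - x i (k + 1) * hz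
      | succ l ih =>
        refine ⟨ih.2, ?_⟩
        intro i k
        have H1 := h1 (i + (k:ℤ) + 1) (l + 1)
        have IH2 := ih.2 i k
        have IH1 := ih.1 i k
        have H2 := h1 i (k + l + 2)
        have H3 := h1 (i + (k:ℤ) + 2) l
        linear_combination (norm := (push_cast; ring_nf))
          (-(x i (k + 1))) * H1 + x (i + (k:ℤ) + (l:ℤ) + 3) 1 * IH2 - IH1 + H2 + x i k * H3
    exact fun l => (key l).1
  -- periodicity helper
  have hper3 : ∀ (t : ℕ) (i : ℤ) (n : ℕ), x (i + 3 * (t:ℤ)) n = x i n := by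
    intro t
    induction t with
    | zero => intro i n; norm_num
    | succ t ih =>
      intro i n
      have e : i + 3 * ((t:ℕ)+1 : ℕ) = (i + 3 * (t:ℤ)) + 3 := by push_cast; ring
      rw [e, hper, ih]
  -- main induction on m
  induction m generalizing n with
  | zero =>
    simp only [Nat.mul_zero, Nat.zero_add, Finset.sum_range_one]
    norm_num
  | succ m IH =>
    obtain ⟨d, rfl⟩ : ∃ d, n = 3 * m + 4 + d := ⟨n - (3 * m + 4), by omega⟩
    -- instances needed
    -- Ha : x 1 1 * x 2 (3m+3+d) = x 1 (3m+4+d) + x 0 (3m+2+d)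
    have Ha : x 1 1 * x 2 (3*m+3+d) = x 1 (3*m+4+d) + x 0 (3*m+2+d) := by
      have h := hrel2 1 (3*m+2+d)
      have e1 : ((1:ℤ) + 1) = 2 := by norm_num
      have e2 : ((1:ℤ) + 2) = 0 + 3 * ((1:ℕ):ℤ) := by norm_num
      rw [e1, e2, hper3 1 0] at h
      linear_combination (norm := (push_cast; ring_nf)) h
    -- Hc : x 1 (3m+4) * x 2 (3m+3+d) = x 1 (6m+7+d) + x 1 (3m+3) * x 0 (3m+2+d)
    have Hc : x 1 (3*m+4) * x 2 (3*m+3+d) = x 1 (6*m+7+d) + x 1 (3*m+3) * x 0 (3*m+2+d) := by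
      have h := G (3*m+2+d) 1 (3*m+3)
      have e1 : (1 : ℤ) + ((3*m+3 : ℕ):ℤ) + 1 = 2 + 3 * ((m+1 : ℕ):ℤ) := by push_cast; ring
      have e2 : (1 : ℤ) + ((3*m+3 : ℕ):ℤ) + 2 = 0 + 3 * ((m+2 : ℕ):ℤ) := by push_cast; ring
      rw [e1, e2, hper3 (m+1) 2, hper3 (m+2) 0] at h
      linear_combination (norm := (push_cast; ring_nf)) h
    -- He : x 1 (3m+3) * x 1 1 = x 1 (3m+4) + x 1 (3m+2)
    have He : x 1 (3*m+3) * x 1 1 = x 1 (3*m+4) + x 1 (3*m+2) := by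
      have h := h1 1 (3*m+2)
      have e1 : (1 : ℤ) + ((3*m+2 : ℕ):ℤ) + 1 = 1 + 3 * ((m+1 : ℕ):ℤ) := by push_cast; ring
      rw [e1, hper3 (m+1) 1] at h
      linear_combination (norm := (push_cast; ring_nf)) h
    -- Hf : x 1 (3m+2) * x 0 (3m+2+d) = x 1 (6m+4+d) + x 1 (3m+1) * x 1 (3m+1+d)
    have Hf : x 1 (3*m+2) * x 0 (3*m+2+d) = x 1 (6*m+4+d) + x 1 (3*m+1) * x 1 (3*m+1+d) := by
      have h := G (3*m+1+d) 1 (3*m+1)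
      have e1 : (1 : ℤ) + ((3*m+1 : ℕ):ℤ) + 1 = 0 + 3 * ((m+1 : ℕ):ℤ) := by push_cast; ring
      have e2 : (1 : ℤ) + ((3*m+1 : ℕ):ℤ) + 2 = 1 + 3 * ((m+1 : ℕ):ℤ) := by push_cast; ring
      rw [e1, e2, hper3 (m+1) 0, hper3 (m+1) 1] at h
      linear_combination (norm := (push_cast; ring_nf)) h
    -- the sum identity
    have HI := IH (3*m+1+d) (by omega)
    rw [show 2*(m+1)+1 = 2*m+1+1+1 from by ring, Finset.sum_range_succ',
        Finset.sum_range_succ']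
    have Hsum : (∑ s ∈ Finset.range (2*m+1),
        if (s+1+1) % 2 = 0 then x 1 1 * x 1 (3*m+4+d + 3*(m+1) - 3*(s+1+1))
        else x 1 (3*m+4+d + 3*(m+1) - 3*(s+1+1)))
        = x 1 (3*m+1) * x 1 (3*m+1+d) := by
      rw [HI]
      apply Finset.sum_congr rfl
      intro s hs
      simp only [Finset.mem_range] at hs
      have e1 : (s+1+1) % 2 = s % 2 := by omega
      have e2 : 3*m+4+d + 3*(m+1) - 3*(s+1+1) = 3*m+1+d + 3*m - 3*s := by omega
      rw [e1, e2]
    rw [Hsum]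
    have e0 : 3*m+4+d + 3*(m+1) - 3*0 = 6*m+7+d := by omega
    have e1 : 3*m+4+d + 3*(m+1) - 3*(0+1) = 6*m+4+d := by omega
    norm_num [e0, e1]
    linear_combination (norm := (push_cast; ring_nf))
      (-(x 1 (3*m+4))) * Ha + x 1 1 * Hc + x 0 (3*m+2+d) * He + Hf
end

section
/- Take r = 3. For all integers m ≥ 0 and n ≥ 3m+2: x_{1,3m+2}·x_{1,n} = x_{1,2} · Σ_{s=0}^{m} x_{1,n+3m−6s}; that is, X_{E_1[3m+2]}X_{E_1[n]} = X_{E_1[2]}(X_{E_1[n+3m]} + X_{E_1[n+3m−6]} + ⋯ + X_{E_1[n−3m]}). -/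
namespace RankThreeTubeAux7

variable {R : Type*} [CommRing R]

/-- Coefficient `c j = x (1+j) 1`. -/
def cc (x : ℤ → ℕ → R) (j : ℕ) : R := x (1 + (j : ℤ)) 1

lemma rec' (x : ℤ → ℕ → R)
    (hrel1 : ∀ (i : ℤ) (k : ℕ), x i (k + 1) * x (i + (k + 1 : ℕ)) 1 = x i (k + 2) + x i k)
    (j : ℕ) : x 1 (j + 1) * cc x (j + 1) = x 1 (j + 2) + x 1 j :=
  hrel1 1 j

lemma cc_per (x : ℤ → ℕ → R)
    (hper : ∀ (i : ℤ) (n : ℕ), x (i + 3) n = x i n)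
    (j : ℕ) : cc x (j + 3) = cc x j := by
  unfold cc
  have h : (1 : ℤ) + ((j + 3 : ℕ) : ℤ) = (1 + (j : ℤ)) + 3 := by push_cast; ring
  rw [h, hper]

lemma cc_per3 (x : ℤ → ℕ → R)
    (hper : ∀ (i : ℤ) (n : ℕ), x (i + 3) n = x i n)
    (k j : ℕ) : cc x (j + 3 * k) = cc x j := by
  induction k with
  | zero => norm_num
  | succ k ih =>
    have := cc_per x hper (j + 3 * k)
    rw [show j + 3 * (k + 1) = j + 3 * k + 3 from by ring, this, ih]

lemma lemW (x : ℤ → ℕ → R)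
    (hper : ∀ (i : ℤ) (n : ℕ), x (i + 3) n = x i n)
    (hzero : ∀ i : ℤ, x i 0 = 1)
    (hrel1 : ∀ (i : ℤ) (k : ℕ), x i (k + 1) * x (i + (k + 1 : ℕ)) 1 = x i (k + 2) + x i k)
    (b : ℕ) : x 1 (b + 3) * x 1 (b + 1) = x 1 (b + 4) * x 1 b + x 1 2 := by
  induction b with
  | zero =>
    have h2 := rec' x hrel1 2
    have hc : cc x 3 = cc x 0 := by
      have := cc_per x hper 0
      simpa using this
    have hc0 : cc x 0 = x 1 1 := by unfold cc; norm_num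
    norm_num
    rw [hzero 1]
    linear_combination h2 - (x 1 3) * hc - (x 1 3) * hc0
  | succ b ih =>
    rw [show b + 1 + 3 = b + 4 from by ring, show b + 1 + 1 = b + 2 from by ring,
      show b + 1 + 4 = b + 5 from by ring]
    have h1 := rec' x hrel1 (b + 3)
    have h2 := rec' x hrel1 b
    have h3 : cc x (b + 4) = cc x (b + 1) := by
      have := cc_per x hper (b + 1)
      rw [show b + 1 + 3 = b + 4 from by ring] at this
      exact this
    rw [show b + 3 + 1 = b + 4 from by ring, show b + 3 + 2 = b + 5 from by ring] at h1
    linear_combination x 1 (b + 1) * h1 - x 1 (b + 4) * h2 + ih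
      - (x 1 (b + 4) * x 1 (b + 1)) * h3

lemma lemK (x : ℤ → ℕ → R)
    (hper : ∀ (i : ℤ) (n : ℕ), x (i + 3) n = x i n)
    (hzero : ∀ i : ℤ, x i 0 = 1)
    (hrel1 : ∀ (i : ℤ) (k : ℕ), x i (k + 1) * x (i + (k + 1 : ℕ)) 1 = x i (k + 2) + x i k)
    (b : ℕ) : x 1 (b + 3) * x 1 (b + 2) = x 1 (b + 5) * x 1 b + cc x (b + 1) * x 1 2 := by
  have h1 := rec' x hrel1 (b + 3)
  have h2 := rec' x hrel1 b
  have h3 : cc x (b + 4) = cc x (b + 1) := by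
    have := cc_per x hper (b + 1)
    rw [show b + 1 + 3 = b + 4 from by ring] at this
    exact this
  have hW := lemW x hper hzero hrel1 b
  rw [show b + 3 + 1 = b + 4 from by ring, show b + 3 + 2 = b + 5 from by ring] at h1
  linear_combination (x 1 b) * h1 - (x 1 (b + 3)) * h2 + (cc x (b + 1)) * hW
    - (x 1 (b + 4) * x 1 b) * h3

lemma lemT (x : ℤ → ℕ → R)
    (hper : ∀ (i : ℤ) (n : ℕ), x (i + 3) n = x i n)
    (hzero : ∀ i : ℤ, x i 0 = 1)
    (hrel1 : ∀ (i : ℤ) (k : ℕ), x i (k + 1) * x (i + (k + 1 : ℕ)) 1 = x i (k + 2) + x i k)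
    (m : ℕ) : ∀ t : ℕ,
    x 1 (3 * m + 5) * x 1 (3 * m + 3 + t) =
      x 1 (3 * m + 2) * x 1 (3 * m + 6 + t) + x 1 2 * x 1 t := by
  intro t
  induction t using Nat.twoStepInduction with
  | zero =>
    have hW := lemW x hper hzero hrel1 (3 * m + 2)
    rw [show 3 * m + 2 + 3 = 3 * m + 5 from by ring, show 3 * m + 2 + 1 = 3 * m + 3 from by ring,
      show 3 * m + 2 + 4 = 3 * m + 6 from by ring] at hW
    rw [hzero 1]
    rw [show 3 * m + 3 + 0 = 3 * m + 3 from by ring, show 3 * m + 6 + 0 = 3 * m + 6 from by ring]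
    linear_combination hW
  | one =>
    have hK := lemK x hper hzero hrel1 (3 * m + 2)
    rw [show 3 * m + 2 + 3 = 3 * m + 5 from by ring, show 3 * m + 2 + 2 = 3 * m + 4 from by ring,
      show 3 * m + 2 + 5 = 3 * m + 7 from by ring, show 3 * m + 2 + 1 = 3 * m + 3 from by ring]
      at hK
    have hc : cc x (3 * m + 3) = x 1 1 := by
      have h := cc_per3 x hper (m + 1) 0
      rw [show 0 + 3 * (m + 1) = 3 * m + 3 from by ring] at h
      rw [h]
      unfold cc
      norm_num
    rw [show 3 * m + 3 + 1 = 3 * m + 4 from by ring, show 3 * m + 6 + 1 = 3 * m + 7 from by ring]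
    linear_combination hK + (x 1 2) * hc
  | more t hT0 hT1 =>
    rw [show 3 * m + 3 + (t + 2) = 3 * m + 5 + t from by ring,
      show 3 * m + 6 + (t + 2) = 3 * m + 8 + t from by ring]
    rw [show 3 * m + 3 + (t + 1) = 3 * m + 4 + t from by ring,
      show 3 * m + 6 + (t + 1) = 3 * m + 7 + t from by ring] at hT1
    have hr1 := rec' x hrel1 (3 * m + 3 + t)
    rw [show 3 * m + 3 + t + 1 = 3 * m + 4 + t from by ring,
      show 3 * m + 3 + t + 2 = 3 * m + 5 + t from by ring] at hr1
    have hr2 := rec' x hrel1 (3 * m + 6 + t)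
    rw [show 3 * m + 6 + t + 1 = 3 * m + 7 + t from by ring,
      show 3 * m + 6 + t + 2 = 3 * m + 8 + t from by ring] at hr2
    have hr3 := rec' x hrel1 t
    have hc1 : cc x (3 * m + 4 + t) = cc x (t + 1) := by
      have h := cc_per3 x hper (m + 1) (t + 1)
      rw [show t + 1 + 3 * (m + 1) = 3 * m + 4 + t from by ring] at h
      exact h
    have hc2 : cc x (3 * m + 7 + t) = cc x (t + 1) := by
      have h := cc_per3 x hper (m + 2) (t + 1)
      rw [show t + 1 + 3 * (m + 2) = 3 * m + 7 + t from by ring] at h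
      exact h
    linear_combination (cc x (3 * m + 4 + t)) * hT1 - hT0 - (x 1 (3 * m + 5)) * hr1
      + (x 1 (3 * m + 2)) * hr2 - (x 1 (3 * m + 2) * x 1 (3 * m + 7 + t)) * hc2
      + (x 1 2) * hr3 + (x 1 2 * x 1 (t + 1) + x 1 (3 * m + 2) * x 1 (3 * m + 7 + t)) * hc1

end RankThreeTubeAux7

/-- rank-3 tube (Proposition 8.3(2)). For `m ≥ 0`, `n ≥ 3m+2`:
`X_{E_1[3m+2]}X_{E_1[n]} = X_{E_1[2]}(X_{E_1[n+3m]} + X_{E_1[n+3m-6]} + ⋯ + X_{E_1[n-3m]})`. -/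
theorem rank_three_tube_formula_7 {R : Type*} [CommRing R]
    (x : ℤ → ℕ → R)
    (hper : ∀ (i : ℤ) (n : ℕ), x (i + 3) n = x i n)
    (hzero : ∀ i : ℤ, x i 0 = 1)
    (hrel1 : ∀ (i : ℤ) (k : ℕ), x i (k + 1) * x (i + (k + 1 : ℕ)) 1 = x i (k + 2) + x i k)
    (hrel2 : ∀ (i : ℤ) (k : ℕ), x i 1 * x (i + 1) (k + 1) = x i (k + 2) + x (i + 2) k)
    (m n : ℕ) (hn : 3 * m + 2 ≤ n) :
    x 1 (3 * m + 2) * x 1 n =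
      x 1 2 * ∑ s ∈ Finset.range (m + 1), x 1 (n + 3 * m - 6 * s) := by
  induction m generalizing n with
  | zero =>
    rw [Finset.sum_range_one]
    norm_num
  | succ m ih =>
    obtain ⟨t, ht, rfl⟩ : ∃ t, 2 ≤ t ∧ n = 3 * m + 3 + t :=
      ⟨n - (3 * m + 3), by omega, by omega⟩
    have hT := RankThreeTubeAux7.lemT x hper hzero hrel1 m t
    have ihh := ih (3 * m + 6 + t) (by omega)
    rw [Finset.sum_range_succ]
    have hsum : ∑ s ∈ Finset.range (m + 1), x 1 (3 * m + 3 + t + 3 * (m + 1) - 6 * s)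
        = ∑ s ∈ Finset.range (m + 1), x 1 (3 * m + 6 + t + 3 * m - 6 * s) := by
      refine Finset.sum_congr rfl fun s hs => ?_
      have hsm : s ≤ m := by simpa [Nat.lt_succ_iff] using hs
      congr 1
      omega
    rw [hsum, show 3 * m + 3 + t + 3 * (m + 1) - 6 * (m + 1) = t from by omega,
      show 3 * (m + 1) + 2 = 3 * m + 5 from by ring]
    linear_combination hT + ihh
end

section
/- Take r = 3. For all integers m ≥ 0 and n ≥ 3m+3: x_{1,3m+3}·x_{1,n} = Σ_{s=0}^{2m+2} t_s, where t_s = x_{1,n+3m+3−3s} if s is even and t_s = x_{2,1}·x_{1,n+3m+3−3s} if s is odd; that is, X_{E_1[3m+3]}X_{E_1[n]} = X_{E_1[n+3m+3]} + X_{E_2}X_{E_1[n+3m]} + X_{E_1[n+3m−3]} + X_{E_2}X_{E_1[n+3m−6]} + ⋯ + X_{E_1[n−3m+3]} + X_{E_2}X_{E_1[n−3m]} + X_{E_1[n−3m−3]}. -/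
private lemma tube3_trace {R : Type*} [CommRing R] (x : ℤ → ℕ → R)
    (hper : ∀ (i : ℤ) (n : ℕ), x (i + 3) n = x i n)
    (hzero : ∀ i : ℤ, x i 0 = 1)
    (hrel1 : ∀ (i : ℤ) (k : ℕ), x i (k + 1) * x (i + (k + 1 : ℕ)) 1 = x i (k + 2) + x i k) :
    ∀ k : ℕ, x 1 (k + 6) + x 1 k = (x 1 3 - x 2 1) * x 1 (k + 3) := by
  have p4 : x 4 1 = x 1 1 := by have := hper 1 1; norm_num at this; exact this
  have p5 : x 5 1 = x 2 1 := by have := hper 2 1; norm_num at this; exact this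
  have p6 : x 6 1 = x 3 1 := by have := hper 3 1; norm_num at this; exact this
  have p7 : x 7 1 = x 1 1 := by have := hper 4 1; norm_num at this; rw [this, p4]
  have hz := hzero 1
  have h0 := hrel1 1 0; have h1 := hrel1 1 1; have h2 := hrel1 1 2
  have h3 := hrel1 1 3; have h4 := hrel1 1 4; have h5 := hrel1 1 5
  norm_num at h0 h1 h2 h3 h4 h5
  rw [p4] at h2; rw [p5] at h3; rw [p6] at h4; rw [p7] at h5
  have e2 : x 1 2 = x 1 1 * x 2 1 - 1 := by linear_combination -h0 - hz
  have e3 : x 1 3 = x 1 2 * x 3 1 - x 1 1 := by linear_combination -h1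
  have e4 : x 1 4 = x 1 3 * x 1 1 - x 1 2 := by linear_combination -h2
  have e5 : x 1 5 = x 1 4 * x 2 1 - x 1 3 := by linear_combination -h3
  have e6 : x 1 6 = x 1 5 * x 3 1 - x 1 4 := by linear_combination -h4
  have e7 : x 1 7 = x 1 6 * x 1 1 - x 1 5 := by linear_combination -h5
  have base0 : x 1 6 + x 1 0 = (x 1 3 - x 2 1) * x 1 3 := by
    rw [hz, e6, e5, e4, e3, e2]; ring
  have base1 : x 1 7 + x 1 1 = (x 1 3 - x 2 1) * x 1 4 := by
    rw [e7, e6, e5, e4, e3, e2]; ring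
  have key : ∀ k : ℕ, (x 1 (k + 6) + x 1 k = (x 1 3 - x 2 1) * x 1 (k + 3)) ∧
      (x 1 (k + 7) + x 1 (k + 1) = (x 1 3 - x 2 1) * x 1 (k + 4)) := by
    intro k
    induction k with
    | zero => exact ⟨base0, base1⟩
    | succ k ih =>
      obtain ⟨Tk, Tk1⟩ := ih
      refine ⟨Tk1, ?_⟩
      have r1 := hrel1 1 k
      have r2 := hrel1 1 (k + 3)
      have r3 := hrel1 1 (k + 6)
      push_cast at r1 r2 r3
      have q1 := hper ((k : ℤ) + 2) 1
      have q2 := hper ((k : ℤ) + 5) 1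
      rw [show (k : ℤ) + 2 + 3 = 1 + (k + 3 + 1) by ring] at q1
      rw [show (k : ℤ) + 5 + 3 = 1 + (k + 6 + 1) by ring] at q2
      rw [show (k : ℤ) + 2 = 1 + (k + 1) by ring] at q1
      rw [q1] at r2
      rw [q2, show (k : ℤ) + 5 = 1 + (k + 3 + 1) by ring, q1] at r3
      have g1 : x 1 (k + 8) + x 1 (k + 2) = (x 1 3 - x 2 1) * x 1 (k + 5) := by
        linear_combination (-1 : R) * r3 - r1 + (x 1 3 - x 2 1) * r2
          + x (1 + ((k : ℤ) + 1)) 1 * Tk1 - Tk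
      convert g1 using 3
  exact fun k => (key k).1

private lemma tube3_main {R : Type*} [CommRing R] (x : ℤ → ℕ → R)
    (hper : ∀ (i : ℤ) (n : ℕ), x (i + 3) n = x i n)
    (hzero : ∀ i : ℤ, x i 0 = 1)
    (hrel1 : ∀ (i : ℤ) (k : ℕ), x i (k + 1) * x (i + (k + 1 : ℕ)) 1 = x i (k + 2) + x i k)
    (m : ℕ) : ∀ n : ℕ, 3 * m + 3 ≤ n →
    x 1 (3 * m + 3) * x 1 n =
      ∑ s ∈ Finset.range (2 * m + 3),
        if s % 2 = 0 then x 1 (n + 3 * m + 3 - 3 * s)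
        else x 2 1 * x 1 (n + 3 * m + 3 - 3 * s) := by
  have T := tube3_trace x hper hzero hrel1
  induction m using Nat.twoStepInduction with
  | zero =>
    intro n hn
    obtain ⟨k, rfl⟩ : ∃ k, n = k + 3 := ⟨n - 3, by omega⟩
    simp only [Finset.sum_range_succ, Finset.sum_range_zero]
    norm_num
    rw [show k + 3 + 3 - 6 = k by omega, show k + 3 + 3 = k + 6 by omega]
    linear_combination -T k
  | one =>
    intro n hn
    obtain ⟨k, rfl⟩ : ∃ k, n = k + 6 := ⟨n - 6, by omega⟩
    simp only [Finset.sum_range_succ, Finset.sum_range_zero]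
    norm_num
    rw [show k + 6 + 3 + 3 - 6 = k + 6 by omega, show k + 6 + 3 = k + 9 by omega,
      show k + 6 + 3 + 3 - 9 = k + 3 by omega, show k + 6 + 3 + 3 - 12 = k by omega,
      show k + 6 + 3 + 3 = k + 12 by omega]
    have T0 := T 0
    norm_num at T0
    have hA : x 1 6 = (x 1 3 - x 2 1) * x 1 3 - 1 := by linear_combination T0 - hzero 1
    have C0 := T k
    have C3 := T (k + 3)
    have C6 := T (k + 6)
    rw [show k + 3 + 6 = k + 9 by omega, show k + 3 + 3 = k + 6 by omega] at C3
    rw [show k + 6 + 6 = k + 12 by omega, show k + 6 + 3 = k + 9 by omega] at C6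
    linear_combination x 1 (k + 6) * hA - x 1 3 * C3 - C6 - C0
  | more m IH1 IH2 =>
    intro n hn
    have hn9 : 3 * m + 9 ≤ n := by omega
    have A := IH2 n (by omega)
    have B := IH1 n (by omega)
    have hx : x 1 (3 * (m + 2) + 3) =
        (x 1 3 - x 2 1) * x 1 (3 * (m + 1) + 3) - x 1 (3 * m + 3) := by
      have hT := T (3 * m + 3)
      rw [show 3 * m + 3 + 6 = 3 * (m + 2) + 3 by ring,
        show 3 * m + 3 + 3 = 3 * (m + 1) + 3 by ring] at hT
      linear_combination hT
    have key1 : ∀ s ∈ Finset.range (2 * (m + 1) + 3),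
        (x 1 3 - x 2 1) * (if s % 2 = 0 then x 1 (n + 3 * (m + 1) + 3 - 3 * s)
          else x 2 1 * x 1 (n + 3 * (m + 1) + 3 - 3 * s)) =
        ((if s % 2 = 0 then x 1 (n + 3 * m + 9 - 3 * s)
            else x 2 1 * x 1 (n + 3 * m + 9 - 3 * s)) +
         (if (s + 2) % 2 = 0 then x 1 (n + 3 * m + 9 - 3 * (s + 2))
            else x 2 1 * x 1 (n + 3 * m + 9 - 3 * (s + 2)))) := by
      intro s hs
      simp only [Finset.mem_range] at hs
      have hT := T (n + 3 * m + 3 - 3 * s)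
      rw [show n + 3 * m + 3 - 3 * s + 6 = n + 3 * m + 9 - 3 * s by omega,
        show n + 3 * m + 3 - 3 * s + 3 = n + 3 * (m + 1) + 3 - 3 * s by omega] at hT
      rw [show (s + 2) % 2 = s % 2 by omega,
        show n + 3 * m + 9 - 3 * (s + 2) = n + 3 * m + 3 - 3 * s by omega]
      rcases Nat.mod_two_eq_zero_or_one s with h | h
      · norm_num [h]
        linear_combination -hT
      · norm_num [h]
        linear_combination -(x 2 1) * hT
    have key2 : ∀ s ∈ Finset.range (2 * m + 3),
        (if s % 2 = 0 then x 1 (n + 3 * m + 3 - 3 * s)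
          else x 2 1 * x 1 (n + 3 * m + 3 - 3 * s)) =
        (if (s + 2) % 2 = 0 then x 1 (n + 3 * m + 9 - 3 * (s + 2))
          else x 2 1 * x 1 (n + 3 * m + 9 - 3 * (s + 2))) := by
      intro s hs
      simp only [Finset.mem_range] at hs
      rw [show (s + 2) % 2 = s % 2 by omega,
        show n + 3 * m + 9 - 3 * (s + 2) = n + 3 * m + 3 - 3 * s by omega]
    have hgoal : ∀ s, n + 3 * (m + 2) + 3 - 3 * s = n + 3 * m + 9 - 3 * s := by
      intro s; omega
    simp only [hgoal]
    calc x 1 (3 * (m + 2) + 3) * x 1 n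
        = (x 1 3 - x 2 1) * (x 1 (3 * (m + 1) + 3) * x 1 n)
            - x 1 (3 * m + 3) * x 1 n := by rw [hx]; ring
      _ = (∑ s ∈ Finset.range (2 * (m + 1) + 3),
            (x 1 3 - x 2 1) * (if s % 2 = 0 then x 1 (n + 3 * (m + 1) + 3 - 3 * s)
              else x 2 1 * x 1 (n + 3 * (m + 1) + 3 - 3 * s)))
            - ∑ s ∈ Finset.range (2 * m + 3),
              (if s % 2 = 0 then x 1 (n + 3 * m + 3 - 3 * s)
                else x 2 1 * x 1 (n + 3 * m + 3 - 3 * s)) := by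
          rw [A, B, Finset.mul_sum]
      _ = (∑ s ∈ Finset.range (2 * (m + 1) + 3),
            ((if s % 2 = 0 then x 1 (n + 3 * m + 9 - 3 * s)
                else x 2 1 * x 1 (n + 3 * m + 9 - 3 * s)) +
             (if (s + 2) % 2 = 0 then x 1 (n + 3 * m + 9 - 3 * (s + 2))
                else x 2 1 * x 1 (n + 3 * m + 9 - 3 * (s + 2)))))
            - ∑ s ∈ Finset.range (2 * m + 3),
              (if (s + 2) % 2 = 0 then x 1 (n + 3 * m + 9 - 3 * (s + 2))
                else x 2 1 * x 1 (n + 3 * m + 9 - 3 * (s + 2))) := by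
          rw [Finset.sum_congr rfl key1, Finset.sum_congr rfl key2]
      _ = ∑ s ∈ Finset.range (2 * (m + 2) + 3),
            (if s % 2 = 0 then x 1 (n + 3 * m + 9 - 3 * s)
              else x 2 1 * x 1 (n + 3 * m + 9 - 3 * s)) := by
          rw [Finset.sum_add_distrib]
          rw [show 2 * (m + 1) + 3 = (2 * m + 3) + 2 by ring,
            show 2 * (m + 2) + 3 = ((2 * m + 3) + 2) + 2 by ring]
          simp only [Finset.sum_range_succ]
          simp only [show 2 * m + 1 + 2 = 2 * m + 3 by omega,
            show 2 * m + 2 + 2 = 2 * m + 4 by omega,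
            show 2 * m + 3 + 2 = 2 * m + 5 by omega,
            show 2 * m + 4 + 2 = 2 * m + 6 by omega]
          ring


/-- rank-3 tube (Proposition 8.3(3)). For `m ≥ 0`, `n ≥ 3m+3`:
`X_{E_1[3m+3]}X_{E_1[n]} = X_{E_1[n+3m+3]} + X_{E_2}X_{E_1[n+3m]} + X_{E_1[n+3m-3]} + ⋯
  + X_{E_2}X_{E_1[n-3m]} + X_{E_1[n-3m-3]}`. -/
theorem rank_three_tube_formula_8 {R : Type*} [CommRing R]
    (x : ℤ → ℕ → R)
    (hper : ∀ (i : ℤ) (n : ℕ), x (i + 3) n = x i n)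
    (hzero : ∀ i : ℤ, x i 0 = 1)
    (hrel1 : ∀ (i : ℤ) (k : ℕ), x i (k + 1) * x (i + (k + 1 : ℕ)) 1 = x i (k + 2) + x i k)
    (hrel2 : ∀ (i : ℤ) (k : ℕ), x i 1 * x (i + 1) (k + 1) = x i (k + 2) + x (i + 2) k)
    (m n : ℕ) (hn : 3 * m + 3 ≤ n) :
    x 1 (3 * m + 3) * x 1 n =
      ∑ s ∈ Finset.range (2 * m + 3),
        if s % 2 = 0 then x 1 (n + 3 * m + 3 - 3 * s)
        else x 2 1 * x 1 (n + 3 * m + 3 - 3 * s) :=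
  tube3_main x hper hzero hrel1 m n hn
end
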